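/- arXiv:2309.04439 — 8 statements merged into one kernel-verified Lean document; each statement's English description precedes it below -/
import Mathlib

section
/- Let U, H, Z be real normed spaces, let A : U → H and B : U → Z be continuous linear maps, let f ∈ H, g ∈ Z, and suppose u ∈ U satisfies A u = f and B u = g. Assume the stability bound: there exists C_s > 0 such that C_s·‖v‖_U ≤ ‖A v‖_H + ‖B v‖_Z for all v ∈ U. Then for every τ₁ ≥ 1 and every w ∈ U one has ‖w − u‖_U ≤ C_s⁻¹ · √2 · (‖A w − f‖_H² + τ₁·‖B w − g‖_Z²)^{1/2}. -/
theorem add_le_sqrt_two_mul_sqrt_sq_add_mul_sq (a b : ℝ) {τ : ℝ} (hτ : 1 ≤ τ) :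
    a + b ≤ √2 * √(a ^ 2 + τ * b ^ 2) := by
  have hb : b ^ 2 ≤ τ * b ^ 2 := le_mul_of_one_le_left (sq_nonneg b) hτ
  rw [← Real.sqrt_mul zero_le_two]
  calc a + b ≤ |a + b| := le_abs_self _
    _ = √((a + b) ^ 2) := (Real.sqrt_sq_eq_abs _).symm
    _ ≤ √(2 * (a ^ 2 + b ^ 2)) := Real.sqrt_le_sqrt add_sq_le
    _ ≤ √(2 * (a ^ 2 + τ * b ^ 2)) := by gcongr

theorem mul_norm_sub_le_of_stability {U H Z F G : Type*}
    [SeminormedAddGroup U] [SeminormedAddGroup H] [SeminormedAddGroup Z]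
    [FunLike F U H] [AddMonoidHomClass F U H] [FunLike G U Z] [AddMonoidHomClass G U Z]
    (A : F) (B : G) {c : ℝ} (hstab : ∀ v, c * ‖v‖ ≤ ‖A v‖ + ‖B v‖)
    {u : U} {f : H} {g : Z} (hAu : A u = f) (hBu : B u = g) (w : U) :
    c * ‖w - u‖ ≤ ‖A w - f‖ + ‖B w - g‖ := by
  simpa only [map_sub, hAu, hBu] using hstab (w - u)

/-- a posteriori error estimate for the PINN loss. -/
theorem pinn_a_posteriori_estimate
    {U H Z : Type*} [NormedAddCommGroup U] [NormedSpace ℝ U]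
    [NormedAddCommGroup H] [NormedSpace ℝ H]
    [NormedAddCommGroup Z] [NormedSpace ℝ Z]
    (A : U →L[ℝ] H) (B : U →L[ℝ] Z) (f : H) (g : Z) (u : U)
    (hAu : A u = f) (hBu : B u = g)
    (Cs : ℝ) (hCs : 0 < Cs)
    (hstab : ∀ v : U, Cs * ‖v‖ ≤ ‖A v‖ + ‖B v‖) :
    ∀ τ₁ : ℝ, 1 ≤ τ₁ → ∀ w : U,
      ‖w - u‖ ≤ Cs⁻¹ * Real.sqrt 2 *
        Real.sqrt (‖A w - f‖ ^ 2 + τ₁ * ‖B w - g‖ ^ 2) := by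
  intro τ₁ hτ₁ w
  rw [mul_assoc, le_inv_mul_iff₀ hCs]
  exact (mul_norm_sub_le_of_stability A B hstab hAu hBu w).trans
    (add_le_sqrt_two_mul_sqrt_sq_add_mul_sq _ _ hτ₁)
end

section
/- Let U, H, Z be real normed spaces, A : U → H and B : U → Z continuous linear maps, f ∈ H, g ∈ Z, τ₁ > 0, and define the PINN loss J_{τ₁}(v) := ‖A v − f‖_H² + τ₁·‖B v − g‖_Z² for v ∈ U. Let X be a real normed space and ι : X → U a continuous linear map. Suppose u ∈ U is a solution in the sense that there exists a sequence (u_k) in X with ‖ι u_k − u‖_U → 0 and ‖A(ι u_k) − f‖_H + ‖B(ι u_k) − g‖_Z → 0 as k → ∞. Let (N_n)_{n∈ℕ} be subsets of X with N_n ⊆ N_{n+1} for all n and with ⋃_n N_n dense in X. If (u_n) is a sequence with u_n ∈ N_n and J_{τ₁}(ι u_n) ≤ inf{ J_{τ₁}(ι v) : v ∈ N_n } + γ_n for some sequence γ_n → 0, then J_{τ₁}(ι u_n) → 0 as n → ∞. -/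
/-!
The loss `v ↦ J (ι v)` is a continuous, nonnegative function on `X` whose infimum is `0`, as the
sequence `(uk k)` shows. For `ε > 0` the set where it is below `ε` is open and nonempty, so it meets
the dense union `⋃ n, N n`, hence every `N n` with `n` large. Thus `inf_{N n} J ∘ ι → 0`, and the
quasi-minimizers are squeezed between `0` and this infimum plus `γ n`.
-/

open Filter Topology Set

section DenseExhaustion

variable {X : Type*} [TopologicalSpace X] {F : X → ℝ} {N : ℕ → Set X}

theorem eventually_sInf_image_lt_of_dense_iUnion (hF : Continuous F) (hbdd : BddBelow (range F))
    (hN : Monotone N) (hdense : Dense (⋃ n, N n)) {x : X} {c : ℝ} (hx : F x < c) :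
    ∀ᶠ n in atTop, sInf (F '' N n) < c := by
  obtain ⟨v, hv_mem, hv⟩ :=
    hdense.exists_mem_open (isOpen_lt hF continuous_const) ⟨x, hx⟩
  obtain ⟨m, hvm⟩ := mem_iUnion.mp hv_mem
  filter_upwards [eventually_ge_atTop m] with n hn
  exact (csInf_le (hbdd.mono (image_subset_range F (N n))) ⟨v, hN hn hvm, rfl⟩).trans_lt hv

theorem tendsto_sInf_image_of_dense_iUnion (hF : Continuous F) (hF0 : ∀ x, 0 ≤ F x)
    (hinf : ∀ ε > 0, ∃ x, F x < ε) (hN : Monotone N) (hdense : Dense (⋃ n, N n)) :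
    Tendsto (fun n => sInf (F '' N n)) atTop (𝓝 0) := by
  have hbdd : BddBelow (range F) := ⟨0, forall_mem_range.mpr hF0⟩
  refine tendsto_order.mpr ⟨fun a ha => Eventually.of_forall fun n => ?_, fun ε hε => ?_⟩
  · exact ha.trans_le (Real.sInf_nonneg (forall_mem_image.mpr fun x _ => hF0 x))
  · obtain ⟨x, hx⟩ := hinf ε hε
    exact eventually_sInf_image_lt_of_dense_iUnion hF hbdd hN hdense hx

theorem tendsto_zero_of_quasiMinimizing (hF : Continuous F) (hF0 : ∀ x, 0 ≤ F x)
    (hinf : ∀ ε > 0, ∃ x, F x < ε) (hN : Monotone N) (hdense : Dense (⋃ n, N n))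
    {un : ℕ → X} {γ : ℕ → ℝ} (hγ : Tendsto γ atTop (𝓝 0))
    (hquasi : ∀ n, F (un n) ≤ sInf (F '' N n) + γ n) :
    Tendsto (fun n => F (un n)) atTop (𝓝 0) := by
  have hbound : Tendsto (fun n => sInf (F '' N n) + γ n) atTop (𝓝 0) := by
    simpa using (tendsto_sInf_image_of_dense_iUnion hF hF0 hinf hN hdense).add hγ
  exact squeeze_zero (fun n => hF0 _) hquasi hbound

end DenseExhaustion

theorem tendsto_sq_add_mul_sq_of_tendsto_add {a b : ℕ → ℝ} (ha : ∀ k, 0 ≤ a k)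
    (hb : ∀ k, 0 ≤ b k) (hab : Tendsto (fun k => a k + b k) atTop (𝓝 0)) (τ : ℝ) :
    Tendsto (fun k => a k ^ 2 + τ * b k ^ 2) atTop (𝓝 0) := by
  have ha0 : Tendsto a atTop (𝓝 0) :=
    squeeze_zero ha (fun k => le_add_of_nonneg_right (hb k)) hab
  have hb0 : Tendsto b atTop (𝓝 0) :=
    squeeze_zero hb (fun k => le_add_of_nonneg_left (ha k)) hab
  simpa using (ha0.pow 2).add ((hb0.pow 2).const_mul τ)

theorem pinn_loss_convergence_of_quasiMinimizing_general
    {U H Z X : Type*} [NormedAddCommGroup U] [NormedSpace ℝ U]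
    [NormedAddCommGroup H] [NormedSpace ℝ H]
    [NormedAddCommGroup Z] [NormedSpace ℝ Z]
    [NormedAddCommGroup X] [NormedSpace ℝ X]
    (A : U →L[ℝ] H) (B : U →L[ℝ] Z) (f : H) (g : Z)
    (τ₁ : ℝ) (hτ₁ : 0 < τ₁)
    (J : U → ℝ) (hJ : ∀ v : U, J v = ‖A v - f‖ ^ 2 + τ₁ * ‖B v - g‖ ^ 2)
    (ι : X →L[ℝ] U) (uk : ℕ → X)
    (huk2 : Tendsto (fun k => ‖A (ι (uk k)) - f‖ + ‖B (ι (uk k)) - g‖) atTop (nhds 0))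
    (N : ℕ → Set X) (hmono : ∀ n, N n ⊆ N (n + 1)) (hdense : Dense (⋃ n, N n))
    (un : ℕ → X)
    (γ : ℕ → ℝ) (hγ : Tendsto γ atTop (nhds 0))
    (hquasi : ∀ n, J (ι (un n)) ≤ sInf ((fun v => J (ι v)) '' N n) + γ n) :
    Tendsto (fun n => J (ι (un n))) atTop (nhds 0) := by
  have hJι : (fun v => J (ι v)) = fun v => ‖A (ι v) - f‖ ^ 2 + τ₁ * ‖B (ι v) - g‖ ^ 2 :=
    funext fun v => hJ (ι v)
  have hloss_uk : Tendsto (fun k => J (ι (uk k))) atTop (𝓝 0) := by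
    simpa only [hJ] using tendsto_sq_add_mul_sq_of_tendsto_add (fun _ => norm_nonneg _)
      (fun _ => norm_nonneg _) huk2 τ₁
  have hinf : ∀ ε > 0, ∃ v, J (ι v) < ε := fun ε hε =>
    let ⟨k, hk⟩ := (hloss_uk.eventually (gt_mem_nhds hε)).exists
    ⟨uk k, hk⟩
  exact tendsto_zero_of_quasiMinimizing (F := fun v => J (ι v)) (by rw [hJι]; fun_prop)
    (fun v => by rw [hJ]; positivity) hinf (monotone_nat_of_le_succ hmono) hdense hγ hquasi

/-- convergence of the PINN loss along quasi-minimizing sequences. -/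
theorem pinn_loss_convergence_of_quasiMinimizing
    {U H Z X : Type*} [NormedAddCommGroup U] [NormedSpace ℝ U]
    [NormedAddCommGroup H] [NormedSpace ℝ H]
    [NormedAddCommGroup Z] [NormedSpace ℝ Z]
    [NormedAddCommGroup X] [NormedSpace ℝ X]
    (A : U →L[ℝ] H) (B : U →L[ℝ] Z) (f : H) (g : Z)
    (τ₁ : ℝ) (hτ₁ : 0 < τ₁)
    (J : U → ℝ) (hJ : ∀ v : U, J v = ‖A v - f‖ ^ 2 + τ₁ * ‖B v - g‖ ^ 2)
    (ι : X →L[ℝ] U) (u : U) (uk : ℕ → X)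
    (huk1 : Tendsto (fun k => ‖ι (uk k) - u‖) atTop (nhds 0))
    (huk2 : Tendsto (fun k => ‖A (ι (uk k)) - f‖ + ‖B (ι (uk k)) - g‖) atTop (nhds 0))
    (N : ℕ → Set X) (hmono : ∀ n, N n ⊆ N (n + 1)) (hdense : Dense (⋃ n, N n))
    (un : ℕ → X) (hun : ∀ n, un n ∈ N n)
    (γ : ℕ → ℝ) (hγ : Tendsto γ atTop (nhds 0))
    (hquasi : ∀ n, J (ι (un n)) ≤ sInf ((fun v => J (ι v)) '' N n) + γ n) :
    Tendsto (fun n => J (ι (un n))) atTop (nhds 0) :=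
  pinn_loss_convergence_of_quasiMinimizing_general A B f g τ₁ hτ₁ J hJ ι uk huk2 N hmono hdense un γ
    hγ hquasi
end

section
/- Let U, H, Z be real normed spaces, A : U → H and B : U → Z continuous linear maps, f ∈ H, g ∈ Z, τ₁ > 0, and J_{τ₁}(v) := ‖A v − f‖_H² + τ₁·‖B v − g‖_Z². Let X be a real normed space, ι : X → U a continuous linear map, and suppose u ∈ U admits an approximating sequence (u_k) in X with ‖ι u_k − u‖_U → 0 and ‖A(ι u_k) − f‖_H + ‖B(ι u_k) − g‖_Z → 0. Let R : U → ℝ be nonnegative and satisfy: R(ι v_k) → R(u) for every sequence (v_k) in X with ‖ι v_k − u‖_U → 0 and ‖A(ι v_k) − f‖_H + ‖B(ι v_k) − g‖_Z → 0. Let τ₂ ≥ 0 and set Ĵ(v) := J_{τ₁}(ι v) + τ₂·R(ι v) for v ∈ X. Let (N_n) be subsets of X with N_n ⊆ N_{n+1} and ⋃_n N_n dense in X, and let (u_n), u_n ∈ N_n, satisfy Ĵ(u_n) ≤ inf{ Ĵ(v) : v ∈ N_n } + γ_n with γ_n → 0. Then limsup_{n→∞} Ĵ(u_n) ≤ τ₂·R(u).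 -/
/-!
Density of `⋃ n, N n` lets one replace the approximating sequence `uk` by a sequence `vk` in
`⋃ n, N n` with `dist (vk k) (uk k) → 0`. Then `ι (vk k) → u` and, since the residuals vanish at
`u`, `Jhat (vk k) → J u + τ₂ * R u = τ₂ * R u`. Each `vk k` lies in `N n` for all large `n`, so
quasi-minimality gives `limsup Jhat (un n) ≤ Jhat (vk k)` for every `k`.
-/

open Filter Set Topology

theorem Dense.exists_seq_dist_tendsto_zero {α : Type*} [PseudoMetricSpace α] {s : Set α}
    (hs : Dense s) (u : ℕ → α) :
    ∃ v : ℕ → α, (∀ k, v k ∈ s) ∧ Tendsto (fun k => dist (v k) (u k)) atTop (𝓝 0) := by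
  choose v hvs hv using fun k : ℕ => hs.exists_dist_lt (u k) (Nat.one_div_pos_of_nat (n := k))
  refine ⟨v, hvs, squeeze_zero (fun _ => dist_nonneg) (fun k => ?_)
    tendsto_one_div_add_atTop_nhds_zero_nat⟩
  rw [dist_comm]
  exact (hv k).le

theorem limsup_le_of_quasiMinimizing {α : Type*} {F : α → ℝ} (hF : BddBelow (range F))
    {N : ℕ → Set α} (hN : Monotone N) {x : ℕ → α} {γ : ℕ → ℝ} (hγ : Tendsto γ atTop (𝓝 0))
    (hx : ∀ n, F (x n) ≤ sInf (F '' N n) + γ n) {v : α} (hv : v ∈ ⋃ n, N n) :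
    limsup (fun n => F (x n)) atTop ≤ F v := by
  obtain ⟨m, hm⟩ := mem_iUnion.mp hv
  have hle : ∀ᶠ n in atTop, F (x n) ≤ F v + γ n := by
    filter_upwards [eventually_ge_atTop m] with n hn
    have := csInf_le (hF.mono (image_subset_range F (N n))) (mem_image_of_mem F (hN hn hm))
    linarith [hx n]
  have hbound : Tendsto (fun n => F v + γ n) atTop (𝓝 (F v)) := by
    simpa using tendsto_const_nhds.add hγ
  obtain ⟨b, hb⟩ := hF
  calc limsup (fun n => F (x n)) atTop
      ≤ limsup (fun n => F v + γ n) atTop :=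
        limsup_le_limsup hle (isCoboundedUnder_le_of_le atTop fun n => hb ⟨x n, rfl⟩)
          hbound.isBoundedUnder_le
    _ = F v := hbound.limsup_eq

theorem regularized_pinn_loss_limsup_bound_general
    {U H Z X : Type*} [NormedAddCommGroup U] [NormedSpace ℝ U]
    [NormedAddCommGroup H] [NormedSpace ℝ H]
    [NormedAddCommGroup Z] [NormedSpace ℝ Z]
    [NormedAddCommGroup X] [NormedSpace ℝ X]
    (A : U →L[ℝ] H) (B : U →L[ℝ] Z) (f : H) (g : Z)
    (τ₁ : ℝ) (hτ₁ : 0 < τ₁)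
    (J : U → ℝ) (hJ : ∀ v : U, J v = ‖A v - f‖ ^ 2 + τ₁ * ‖B v - g‖ ^ 2)
    (ι : X →L[ℝ] U) (u : U) (uk : ℕ → X)
    (huk1 : Tendsto (fun k => ‖ι (uk k) - u‖) atTop (nhds 0))
    (huk2 : Tendsto (fun k => ‖A (ι (uk k)) - f‖ + ‖B (ι (uk k)) - g‖) atTop (nhds 0))
    (R : U → ℝ) (hRnonneg : ∀ v : U, 0 ≤ R v)
    (hRcont : ∀ vk : ℕ → X,
      Tendsto (fun k => ‖ι (vk k) - u‖) atTop (nhds 0) →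
      Tendsto (fun k => ‖A (ι (vk k)) - f‖ + ‖B (ι (vk k)) - g‖) atTop (nhds 0) →
      Tendsto (fun k => R (ι (vk k))) atTop (nhds (R u)))
    (τ₂ : ℝ) (hτ₂ : 0 ≤ τ₂)
    (Jhat : X → ℝ) (hJhat : ∀ v : X, Jhat v = J (ι v) + τ₂ * R (ι v))
    (N : ℕ → Set X) (hmono : ∀ n, N n ⊆ N (n + 1)) (hdense : Dense (⋃ n, N n))
    (un : ℕ → X)
    (γ : ℕ → ℝ) (hγ : Tendsto γ atTop (nhds 0))
    (hquasi : ∀ n, Jhat (un n) ≤ sInf (Jhat '' N n) + γ n) :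
    limsup (fun n => Jhat (un n)) atTop ≤ τ₂ * R u := by
  have hιuk : Tendsto (fun k => ι (uk k)) atTop (𝓝 u) := tendsto_iff_norm_sub_tendsto_zero.mpr huk1
  have hres : Continuous fun v => ‖A v - f‖ + ‖B v - g‖ := by fun_prop
  have hres_u : ‖A u - f‖ + ‖B u - g‖ = 0 :=
    tendsto_nhds_unique ((hres.tendsto u).comp hιuk) huk2
  obtain ⟨hAu, hBu⟩ := (add_eq_zero_iff_of_nonneg (norm_nonneg _) (norm_nonneg _)).mp hres_u
  obtain ⟨vk, hvk_mem, hvk_uk⟩ := hdense.exists_seq_dist_tendsto_zero uk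
  have hιvk : Tendsto (fun k => ι (vk k)) atTop (𝓝 u) :=
    tendsto_of_tendsto_of_dist hιuk <| squeeze_zero (g := fun k => ‖ι‖₊ * dist (vk k) (uk k))
      (fun _ => dist_nonneg) (fun k => dist_comm (ι (vk k)) _ ▸ ι.lipschitz.dist_le_mul _ _)
      (by simpa using hvk_uk.const_mul (‖ι‖₊ : ℝ))
  have hRvk := hRcont vk (tendsto_iff_norm_sub_tendsto_zero.mp hιvk)
    (hres_u ▸ (hres.tendsto u).comp hιvk)
  have hJ_cont : Continuous J := by rw [funext hJ]; fun_prop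
  have hJhat_vk : Tendsto (fun k => Jhat (vk k)) atTop (𝓝 (τ₂ * R u)) := by
    simpa [hJhat, hJ u, hAu, hBu] using ((hJ_cont.tendsto u).comp hιvk).add (hRvk.const_mul τ₂)
  have hJhat_nonneg : ∀ v, 0 ≤ Jhat v := fun v => by
    rw [hJhat, hJ]; have := hRnonneg (ι v); positivity
  refine ge_of_tendsto hJhat_vk (Eventually.of_forall fun k => ?_)
  exact limsup_le_of_quasiMinimizing ⟨0, forall_mem_range.mpr hJhat_nonneg⟩
    (monotone_nat_of_le_succ hmono) hγ hquasi (hvk_mem k)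

/-- limsup bound for the regularized PINN loss along quasi-minimizing
sequences (the paper's loss-convergence theorem for the PDE-constrained problem). -/
theorem regularized_pinn_loss_limsup_bound
    {U H Z X : Type*} [NormedAddCommGroup U] [NormedSpace ℝ U]
    [NormedAddCommGroup H] [NormedSpace ℝ H]
    [NormedAddCommGroup Z] [NormedSpace ℝ Z]
    [NormedAddCommGroup X] [NormedSpace ℝ X]
    (A : U →L[ℝ] H) (B : U →L[ℝ] Z) (f : H) (g : Z)
    (τ₁ : ℝ) (hτ₁ : 0 < τ₁)
    (J : U → ℝ) (hJ : ∀ v : U, J v = ‖A v - f‖ ^ 2 + τ₁ * ‖B v - g‖ ^ 2)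
    (ι : X →L[ℝ] U) (u : U) (uk : ℕ → X)
    (huk1 : Tendsto (fun k => ‖ι (uk k) - u‖) atTop (nhds 0))
    (huk2 : Tendsto (fun k => ‖A (ι (uk k)) - f‖ + ‖B (ι (uk k)) - g‖) atTop (nhds 0))
    (R : U → ℝ) (hRnonneg : ∀ v : U, 0 ≤ R v)
    (hRcont : ∀ vk : ℕ → X,
      Tendsto (fun k => ‖ι (vk k) - u‖) atTop (nhds 0) →
      Tendsto (fun k => ‖A (ι (vk k)) - f‖ + ‖B (ι (vk k)) - g‖) atTop (nhds 0) →
      Tendsto (fun k => R (ι (vk k))) atTop (nhds (R u)))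
    (τ₂ : ℝ) (hτ₂ : 0 ≤ τ₂)
    (Jhat : X → ℝ) (hJhat : ∀ v : X, Jhat v = J (ι v) + τ₂ * R (ι v))
    (N : ℕ → Set X) (hmono : ∀ n, N n ⊆ N (n + 1)) (hdense : Dense (⋃ n, N n))
    (un : ℕ → X) (hun : ∀ n, un n ∈ N n)
    (γ : ℕ → ℝ) (hγ : Tendsto γ atTop (nhds 0))
    (hquasi : ∀ n, Jhat (un n) ≤ sInf (Jhat '' N n) + γ n) :
    limsup (fun n => Jhat (un n)) atTop ≤ τ₂ * R u :=
  regularized_pinn_loss_limsup_bound_general A B f g τ₁ hτ₁ J hJ ι u uk huk1 huk2 R hRnonneg hRcont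
    τ₂ hτ₂ Jhat hJhat N hmono hdense un γ hγ hquasi
end

section
/- Let Ω ⊆ ℝ^d be a bounded open set and δ > 0. Let (u_j)_{j∈ℕ} be a sequence in L²(Ω) with sup_j ‖u_j‖_{L²(Ω)} < ∞, and let y ∈ L²(Ω) be such that ∫_Ω u_j(x) v(x) dx → ∫_Ω y(x) v(x) dx as j → ∞ for every v ∈ L²(Ω) (weak convergence in L²(Ω)). Then ‖Q_δ u_j − Q_δ y‖_{L²(Ω_δ)} → 0 as j → ∞. -/
open MeasureTheory Filter

/-- The averaging operator `Q_δ`. -/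
noncomputable def Qavg {d : ℕ} (δ : ℝ) (v : EuclideanSpace ℝ (Fin d) → ℝ)
    (x : EuclideanSpace ℝ (Fin d)) : ℝ :=
  (volume (Metric.closedBall x (δ / 2))).toReal⁻¹ * ∫ z in Metric.closedBall x (δ / 2), v z

/-- The inner region `Ω_δ = {x ∈ Ω : dist(x, Ωᶜ) > δ/2}`. -/
def OmegaDelta {d : ℕ} (Ω : Set (EuclideanSpace ℝ (Fin d))) (δ : ℝ) :
    Set (EuclideanSpace ℝ (Fin d)) :=
  {x ∈ Ω | δ / 2 < Metric.infDist x Ωᶜ}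

open scoped ENNReal

/-!
Testing the weak convergence against the indicator of the ball `V_δ(x) ⊆ Ω` gives
`Q_δ u_j (x) → Q_δ y (x)` for every `x ∈ Ω_δ`. By Cauchy–Schwarz on `V_δ(x)`,
`|Q_δ v (x)| ≤ |V_δ|^{-1/2} ‖v‖_{L²(Ω)}`, so the averages `Q_δ u_j` are uniformly bounded on
`Ω_δ`, which has finite measure. A uniformly bounded family is uniformly integrable, and Vitali's
convergence theorem turns the pointwise convergence into convergence in `L²(Ω_δ)`.
-/

section General

variable {α E : Type*} [MeasurableSpace α] [NormedAddCommGroup E]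

theorem unifIntegrable_of_ae_norm_le {ι : Type*} {μ : Measure α} {p : ℝ≥0∞}
    (hp : 1 ≤ p) (hp' : p ≠ ∞) {f : ι → α → E} (hf : ∀ i, AEStronglyMeasurable (f i) μ)
    {M : ℝ} (hM : ∀ i, ∀ᵐ x ∂μ, ‖f i x‖ ≤ M) : UnifIntegrable f p μ := by
  refine unifIntegrable_of hp hp' hf fun ε _ => ⟨M.toNNReal + 1, fun i => ?_⟩
  have hzero : {x | M.toNNReal + 1 ≤ ‖f i x‖₊}.indicator (f i) =ᵐ[μ] 0 := by
    filter_upwards [hM i] with x hx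
    have hlt : ‖f i x‖₊ < M.toNNReal + 1 :=
      (norm_toNNReal.symm.trans_le (Real.toNNReal_le_toNNReal hx)).trans_lt (lt_add_one _)
    exact Set.indicator_of_notMem (a := x) hlt.not_ge (f i)
  rw [eLpNorm_congr_ae hzero, eLpNorm_zero]
  exact zero_le

variable [NormedSpace ℝ E] {μ : Measure α}

theorem norm_setIntegral_le_sqrt_measure_mul_eLpNorm {s : Set α} {f : α → E}
    (hs : μ s ≠ ∞) (hf : MemLp f 2 (μ.restrict s)) :
    ‖∫ x in s, f x ∂μ‖ ≤ (μ s).toReal ^ (1 / 2 : ℝ) * (eLpNorm f 2 (μ.restrict s)).toReal := by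
  have holder : eLpNorm f 1 (μ.restrict s) ≤ eLpNorm f 2 (μ.restrict s) * μ s ^ (1 / 2 : ℝ) := by
    have h := eLpNorm_le_eLpNorm_mul_rpow_measure_univ (by norm_num : (1 : ℝ≥0∞) ≤ 2) hf.1
    rw [Measure.restrict_apply_univ] at h
    convert h using 3
    norm_num
  have hfin : eLpNorm f 2 (μ.restrict s) * μ s ^ (1 / 2 : ℝ) ≠ ∞ :=
    ENNReal.mul_ne_top hf.2.ne (ENNReal.rpow_ne_top_of_nonneg (by norm_num) hs)
  have hL1 : ∫⁻ x, ‖f x‖ₑ ∂μ.restrict s ≠ ∞ := by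
    rw [← eLpNorm_one_eq_lintegral_enorm]
    exact (holder.trans_lt hfin.lt_top).ne
  calc ‖∫ x in s, f x ∂μ‖ = ‖∫ x in s, f x ∂μ‖ₑ.toReal := rfl
    _ ≤ (eLpNorm f 1 (μ.restrict s)).toReal := by
      rw [eLpNorm_one_eq_lintegral_enorm]
      exact ENNReal.toReal_mono hL1 (enorm_integral_le_lintegral_enorm f)
    _ ≤ (eLpNorm f 2 (μ.restrict s) * μ s ^ (1 / 2 : ℝ)).toReal := ENNReal.toReal_mono hfin holder
    _ = (μ s).toReal ^ (1 / 2 : ℝ) * (eLpNorm f 2 (μ.restrict s)).toReal := by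
      rw [ENNReal.toReal_mul, ← ENNReal.toReal_rpow, mul_comm]

theorem tendsto_setIntegral_of_tendsto_integral_mul {ι : Type*} {l : Filter ι} {p : ℝ≥0∞}
    {Ω s : Set α} (hs : MeasurableSet s) (hsΩ : s ⊆ Ω) (hμs : μ s ≠ ∞)
    {u : ι → α → ℝ} {y : α → ℝ}
    (hweak : ∀ v : α → ℝ, MemLp v p (μ.restrict Ω) →
      Tendsto (fun j => ∫ x in Ω, u j x * v x ∂μ) l (nhds (∫ x in Ω, y x * v x ∂μ))) :
    Tendsto (fun j => ∫ x in s, u j x ∂μ) l (nhds (∫ x in s, y x ∂μ)) := by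
  have hv : MemLp (s.indicator fun _ => (1 : ℝ)) p (μ.restrict Ω) :=
    memLp_indicator_const p hs 1 (Or.inr (by rwa [Measure.restrict_apply hs,
      Set.inter_eq_self_of_subset_left hsΩ]))
  have htest : ∀ w : α → ℝ,
      ∫ x in Ω, w x * s.indicator (fun _ => (1 : ℝ)) x ∂μ = ∫ x in s, w x ∂μ := fun w => by
    simp_rw [← Set.indicator_mul_right, mul_one]
    rw [setIntegral_indicator hs, Set.inter_eq_self_of_subset_right hsΩ]
  simpa only [htest] using hweak _ hv

end General

theorem MeasureTheory.StronglyMeasurable.setIntegral_closedBall {α E : Type*} [PseudoMetricSpace α]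
    [SecondCountableTopology α] [MeasurableSpace α] [BorelSpace α] [NormedAddCommGroup E]
    [NormedSpace ℝ E] {μ : Measure α} [SFinite μ] {f : α → E} (hf : StronglyMeasurable f)
    (r : ℝ) : StronglyMeasurable (fun x => ∫ z in Metric.closedBall x r, f z ∂μ) := by
  have hS : MeasurableSet {p : α × α | dist p.2 p.1 ≤ r} :=
    (isClosed_le (continuous_snd.dist continuous_fst) continuous_const).measurableSet
  have hrw : (fun x => ∫ z in Metric.closedBall x r, f z ∂μ) =
      fun x => ∫ z, {p : α × α | dist p.2 p.1 ≤ r}.indicator (fun p => f p.2) (x, z) ∂μ := by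
    funext x
    rw [← integral_indicator measurableSet_closedBall]
    rfl
  rw [hrw]
  exact ((hf.comp_measurable measurable_snd).indicator hS).integral_prod_right'

section Averaging

variable {d : ℕ} {Ω : Set (EuclideanSpace ℝ (Fin d))} {δ : ℝ} {x : EuclideanSpace ℝ (Fin d)}

theorem omegaDelta_subset : OmegaDelta Ω δ ⊆ Ω := fun _ hx => hx.1

theorem isOpen_omegaDelta (hΩ : IsOpen Ω) (δ : ℝ) : IsOpen (OmegaDelta Ω δ) :=
  hΩ.inter (isOpen_lt continuous_const (Metric.continuous_infDist_pt _))

theorem closedBall_subset_of_mem_omegaDelta (hx : x ∈ OmegaDelta Ω δ) :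
    Metric.closedBall x (δ / 2) ⊆ Ω := by
  intro z hz
  by_contra hzΩ
  have := Metric.infDist_le_dist_of_mem (x := x) (Set.mem_compl hzΩ)
  rw [Metric.mem_closedBall, dist_comm] at hz
  linarith [hx.2]

theorem qavg_eq_inv_volume_closedBall_zero_mul (v : EuclideanSpace ℝ (Fin d) → ℝ)
    (x : EuclideanSpace ℝ (Fin d)) :
    Qavg δ v x = (volume (Metric.closedBall (0 : EuclideanSpace ℝ (Fin d)) (δ / 2))).toReal⁻¹ *
      ∫ z in Metric.closedBall x (δ / 2), v z := by
  rw [Qavg, Measure.addHaar_closedBall_center]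

theorem qavg_congr_ae {v w : EuclideanSpace ℝ (Fin d) → ℝ} (hvw : v =ᵐ[volume.restrict Ω] w)
    (hx : x ∈ OmegaDelta Ω δ) : Qavg δ v x = Qavg δ w x := by
  rw [Qavg, Qavg, integral_congr_ae
    (ae_restrict_of_ae_restrict_of_subset (closedBall_subset_of_mem_omegaDelta hx) hvw)]

theorem aestronglyMeasurable_qavg (hΩδ : MeasurableSet (OmegaDelta Ω δ))
    {v : EuclideanSpace ℝ (Fin d) → ℝ} (hv : AEStronglyMeasurable v (volume.restrict Ω)) :
    AEStronglyMeasurable (Qavg δ v) (volume.restrict (OmegaDelta Ω δ)) := by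
  have hmk : StronglyMeasurable (Qavg δ (hv.mk v)) := by
    simp_rw [funext (qavg_eq_inv_volume_closedBall_zero_mul (hv.mk v))]
    exact (hv.stronglyMeasurable_mk.setIntegral_closedBall _).const_mul _
  exact hmk.aestronglyMeasurable.congr
    ((ae_restrict_mem hΩδ).mono fun x hx => (qavg_congr_ae hv.ae_eq_mk hx).symm)

theorem abs_qavg_le {v : EuclideanSpace ℝ (Fin d) → ℝ} (hv : MemLp v 2 (volume.restrict Ω))
    (hx : x ∈ OmegaDelta Ω δ) :
    |Qavg δ v x| ≤ (volume (Metric.closedBall (0 : EuclideanSpace ℝ (Fin d)) (δ / 2))).toReal ^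
      (-(1 / 2) : ℝ) * (eLpNorm v 2 (volume.restrict Ω)).toReal := by
  set r := (volume (Metric.closedBall (0 : EuclideanSpace ℝ (Fin d)) (δ / 2))).toReal
  have hB := closedBall_subset_of_mem_omegaDelta hx
  have hCS := norm_setIntegral_le_sqrt_measure_mul_eLpNorm measure_closedBall_lt_top.ne
    (hv.mono_measure (Measure.restrict_mono hB le_rfl))
  rw [Measure.addHaar_closedBall_center] at hCS
  have hr : r ^ (-(1 / 2) : ℝ) = r⁻¹ * r ^ (1 / 2 : ℝ) := by
    rw [show (-(1 / 2) : ℝ) = -1 + 1 / 2 by norm_num,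
      Real.rpow_add' ENNReal.toReal_nonneg (by norm_num), Real.rpow_neg_one]
  rw [qavg_eq_inv_volume_closedBall_zero_mul, abs_mul, abs_inv,
    abs_of_nonneg ENNReal.toReal_nonneg, hr, mul_assoc]
  gcongr
  exact hCS.trans (by gcongr; exact hv.2.ne)

end Averaging

theorem averaging_of_weakly_convergent_sequence_general
    {d : ℕ} (Ω : Set (EuclideanSpace ℝ (Fin d)))
    (hΩopen : IsOpen Ω) (hΩbdd : Bornology.IsBounded Ω)
    (δ : ℝ)
    (u : ℕ → EuclideanSpace ℝ (Fin d) → ℝ)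
    (hu : ∀ j, MemLp (u j) 2 (volume.restrict Ω))
    (C : ℝ) (hbdd : ∀ j, (eLpNorm (u j) 2 (volume.restrict Ω)).toReal ≤ C)
    (y : EuclideanSpace ℝ (Fin d) → ℝ) (hy : MemLp y 2 (volume.restrict Ω))
    (hweak : ∀ v : EuclideanSpace ℝ (Fin d) → ℝ, MemLp v 2 (volume.restrict Ω) →
      Tendsto (fun j => ∫ x in Ω, u j x * v x) atTop (nhds (∫ x in Ω, y x * v x))) :
    Tendsto
      (fun j => (eLpNorm (fun x => Qavg δ (u j) x - Qavg δ y x) 2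
        (volume.restrict (OmegaDelta Ω δ))).toReal)
      atTop (nhds 0) := by
  have hΩδ : MeasurableSet (OmegaDelta Ω δ) := (isOpen_omegaDelta hΩopen δ).measurableSet
  have : IsFiniteMeasure (volume.restrict (OmegaDelta Ω δ)) :=
    isFiniteMeasure_restrict.2 (hΩbdd.subset omegaDelta_subset).measure_lt_top.ne
  set K := (volume (Metric.closedBall (0 : EuclideanSpace ℝ (Fin d)) (δ / 2))).toReal ^
    (-(1 / 2) : ℝ)
  have hmeas : ∀ v, MemLp v 2 (volume.restrict Ω) →
      AEStronglyMeasurable (Qavg δ v) (volume.restrict (OmegaDelta Ω δ)) :=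
    fun v hv => aestronglyMeasurable_qavg hΩδ hv.1
  have hbound : ∀ v, MemLp v 2 (volume.restrict Ω) → ∀ᵐ x ∂volume.restrict (OmegaDelta Ω δ),
      ‖Qavg δ v x‖ ≤ K * (eLpNorm v 2 (volume.restrict Ω)).toReal :=
    fun v hv => (ae_restrict_mem hΩδ).mono fun x hx => abs_qavg_le hv hx
  have hui : UnifIntegrable (fun j => Qavg δ (u j)) 2 (volume.restrict (OmegaDelta Ω δ)) :=
    unifIntegrable_of_ae_norm_le one_le_two ENNReal.ofNat_ne_top (fun j => hmeas _ (hu j))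
      fun j => (hbound _ (hu j)).mono fun x hx =>
        hx.trans (mul_le_mul_of_nonneg_left (hbdd j) (Real.rpow_nonneg ENNReal.toReal_nonneg _))
  have hlim : ∀ᵐ x ∂volume.restrict (OmegaDelta Ω δ),
      Tendsto (fun j => Qavg δ (u j) x) atTop (nhds (Qavg δ y x)) :=
    (ae_restrict_mem hΩδ).mono fun x hx => by
      simp_rw [qavg_eq_inv_volume_closedBall_zero_mul]
      exact (tendsto_setIntegral_of_tendsto_integral_mul measurableSet_closedBall
        (closedBall_subset_of_mem_omegaDelta hx) measure_closedBall_lt_top.ne hweak).const_mul _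
  exact (ENNReal.tendsto_toReal ENNReal.zero_ne_top).comp <|
    tendsto_Lp_finite_of_tendsto_ae one_le_two ENNReal.ofNat_ne_top (fun j => hmeas _ (hu j))
      (MemLp.of_bound (hmeas y hy) _ (hbound y hy)) hui hlim

/-- strong `L²(Ω_δ)` convergence of averages along a bounded weakly
convergent sequence in `L²(Ω)`. -/
theorem averaging_of_weakly_convergent_sequence
    {d : ℕ} (Ω : Set (EuclideanSpace ℝ (Fin d)))
    (hΩopen : IsOpen Ω) (hΩbdd : Bornology.IsBounded Ω)
    (δ : ℝ) (hδ : 0 < δ)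
    (u : ℕ → EuclideanSpace ℝ (Fin d) → ℝ)
    (hu : ∀ j, MemLp (u j) 2 (volume.restrict Ω))
    (C : ℝ) (hbdd : ∀ j, (eLpNorm (u j) 2 (volume.restrict Ω)).toReal ≤ C)
    (y : EuclideanSpace ℝ (Fin d) → ℝ) (hy : MemLp y 2 (volume.restrict Ω))
    (hweak : ∀ v : EuclideanSpace ℝ (Fin d) → ℝ, MemLp v 2 (volume.restrict Ω) →
      Tendsto (fun j => ∫ x in Ω, u j x * v x) atTop (nhds (∫ x in Ω, y x * v x))) :
    Tendsto
      (fun j => (eLpNorm (fun x => Qavg δ (u j) x - Qavg δ y x) 2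
        (volume.restrict (OmegaDelta Ω δ))).toReal)
      atTop (nhds 0) :=
  averaging_of_weakly_convergent_sequence_general Ω hΩopen hΩbdd δ u hu C hbdd y hy hweak
end

section
/- Let d < p < ∞, let Ω ⊆ ℝ^d be an open set, let y : Ω → ℝ be continuously differentiable, let δ > 0 and let x ∈ Ω be such that the closed ball V_δ(x) of radius δ/2 centered at x is contained in Ω, and suppose ∇y restricted to V_δ(x) lies in L^p. Then |y(x) − (Q_δ y)(x)| ≤ (1 − d/p)⁻¹ · δ · |V_δ(x)|^{−1/p} · ‖∇y‖_{L^p(V_δ(x))}, where (Q_δ y)(x) = |V_δ(x)|⁻¹ ∫_{V_δ(x)} y(z) dz. -/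
open MeasureTheory

open Measure Module Metric Set AffineMap
open scoped ENNReal

/-!
Writing `y z - y x` as the integral of `∇y` along the segment from `x` to `z ∈ V := V_δ(x)` and
integrating over `z` bounds `|V| |y x - Q_δ y x|` by `∫₀¹ ∫_V |∇y(x + t (z - x))| ‖z - x‖ dz dt`.
For fixed `t`, Hölder's inequality together with the change of variables `w = x + t (z - x)`, which
maps `V` into itself with Jacobian `t^d`, bounds the inner integral by
`t^(-d/p) ‖∇y‖_{L^p(V)} (δ/2) |V|^(1 - 1/p)`, and `∫₀¹ t^(-d/p) dt = (1 - d/p)⁻¹` because `d < p`.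
-/

theorem enorm_sub_le_lintegral_fderiv_lineMap {E F : Type*} [NormedAddCommGroup E]
    [NormedSpace ℝ E] [NormedAddCommGroup F] [NormedSpace ℝ F] {f : E → F} {s : Set E}
    (hs : IsOpen s) (hf : ContDiffOn ℝ 1 f s) {x z : E} (hxz : segment ℝ x z ⊆ s) :
    ‖f z - f x‖ₑ ≤ ∫⁻ t in Icc (0 : ℝ) 1, ‖fderiv ℝ f (lineMap x z t)‖ₑ * ‖z - x‖ₑ := by
  have hmem : MapsTo (lineMap x z) (Icc (0 : ℝ) 1) s := fun t ht =>
    hxz (segment_eq_image_lineMap ℝ x z ▸ mem_image_of_mem _ ht)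
  have hderiv : ∀ t ∈ Icc (0 : ℝ) 1, HasDerivAt (fun t => f (lineMap x z t))
      (fderiv ℝ f (lineMap x z t) (z - x)) t := fun t ht =>
    ((hf.differentiableOn one_ne_zero).differentiableAt
      (hs.mem_nhds (hmem ht))).hasFDerivAt.comp_hasDerivAt t hasDerivAt_lineMap
  calc ‖f z - f x‖ₑ = ‖f (lineMap x z (1 : ℝ)) - f (lineMap x z (0 : ℝ))‖ₑ := by simp
    _ ≤ ∫⁻ t in Icc (0 : ℝ) 1, ‖deriv (fun t => f (lineMap x z t)) t‖ₑ :=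
      enorm_sub_le_lintegral_deriv_of_contDiffOn_Icc
        (hf.comp (contDiff_lineMap x z).contDiffOn hmem) zero_le_one
    _ ≤ _ := setLIntegral_mono' measurableSet_Icc fun t ht => by
      rw [(hderiv t ht).deriv]
      exact ContinuousLinearMap.le_opENorm _ _

theorem lintegral_Ioc_zero_one_rpow {r : ℝ} (hr : -1 < r) :
    ∫⁻ t in Ioc (0 : ℝ) 1, ENNReal.ofReal (t ^ r) = ENNReal.ofReal (r + 1)⁻¹ := by
  have hint : IntegrableOn (fun t : ℝ => t ^ r) (Ioc 0 1) :=
    (intervalIntegrable_iff_integrableOn_Ioc_of_le zero_le_one).1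
      (intervalIntegral.intervalIntegrable_rpow' hr)
  rw [← ofReal_integral_eq_lintegral_ofReal hint
      ((ae_restrict_iff' measurableSet_Ioc).2 (.of_forall fun t ht => Real.rpow_nonneg ht.1.le r)),
    ← intervalIntegral.integral_of_le zero_le_one, integral_rpow (.inl hr),
    Real.one_rpow, Real.zero_rpow (by linarith), sub_zero, one_div]

section AddHaar

variable {E : Type*} [NormedAddCommGroup E] [NormedSpace ℝ E] [MeasurableSpace E] [BorelSpace E]
  [FiniteDimensional ℝ E] (μ : Measure E) [μ.IsAddHaarMeasure]

theorem map_homothety_addHaar (x : E) {r : ℝ} (hr : r ≠ 0) :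
    μ.map (homothety x r) = ENNReal.ofReal |(r ^ finrank ℝ E)⁻¹| • μ := by
  ext s hs
  have hinv : homothety x r ⁻¹' s = homothety x r⁻¹ '' s := by
    refine (congrFun (image_eq_preimage_of_inverse (fun z => ?_) (fun z => ?_)) s).symm
    · rw [← homothety_mul_apply, mul_inv_cancel₀ hr, homothety_one, id_apply]
    · rw [← homothety_mul_apply, inv_mul_cancel₀ hr, homothety_one, id_apply]
  rw [map_apply (homothety_continuous x r).measurable hs, hinv, addHaar_image_homothety,
    Measure.smul_apply, smul_eq_mul, inv_pow]

theorem lintegral_comp_homothety {f : E → ℝ≥0∞} (hf : Measurable f) (x : E) {r : ℝ}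
    (hr : r ≠ 0) :
    ∫⁻ z, f (homothety x r z) ∂μ = ENNReal.ofReal |(r ^ finrank ℝ E)⁻¹| * ∫⁻ z, f z ∂μ := by
  rw [← lintegral_map hf (homothety_continuous x r).measurable, map_homothety_addHaar μ x hr,
    lintegral_smul_measure, smul_eq_mul]

theorem setLIntegral_closedBall_comp_homothety_le {f : E → ℝ≥0∞} (hf : Measurable f) (x : E)
    (R : ℝ) {t : ℝ} (ht₀ : 0 < t) (ht₁ : t ≤ 1) :
    ∫⁻ z in closedBall x R, f (homothety x t z) ∂μ
      ≤ ENNReal.ofReal (t ^ finrank ℝ E)⁻¹ * ∫⁻ z in closedBall x R, f z ∂μ := by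
  have hmaps : MapsTo (homothety x t) (closedBall x R) (closedBall x R) := fun z hz => by
    rw [homothety_eq_lineMap]
    exact (convex_closedBall x R).lineMap_mem (mem_closedBall_self (dist_nonneg.trans hz)) hz
      ⟨ht₀.le, ht₁⟩
  calc ∫⁻ z in closedBall x R, f (homothety x t z) ∂μ
      ≤ ∫⁻ z, (closedBall x R).indicator f (homothety x t z) ∂μ := by
        rw [← lintegral_indicator measurableSet_closedBall]
        refine lintegral_mono fun z => ?_
        by_cases hz : z ∈ closedBall x R
        · simp [hz, hmaps hz]
        · simp [hz]
    _ = _ := by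
        rw [lintegral_comp_homothety μ (hf.indicator measurableSet_closedBall) x ht₀.ne',
          lintegral_indicator measurableSet_closedBall, abs_of_pos (by positivity)]

theorem setLIntegral_closedBall_comp_homothety_mul_enorm_sub_le {p q : ℝ}
    (hpq : p.HolderConjugate q) {g : E → ℝ≥0∞} (hg : Measurable g) (x : E) (R : ℝ) {t : ℝ}
    (ht₀ : 0 < t) (ht₁ : t ≤ 1) :
    ∫⁻ z in closedBall x R, g (homothety x t z) * ‖z - x‖ₑ ∂μ
      ≤ ENNReal.ofReal (t ^ (-(finrank ℝ E / p))) * (∫⁻ z in closedBall x R, g z ^ p ∂μ) ^ (1 / p)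
        * (ENNReal.ofReal R * μ (closedBall x R) ^ (1 / q)) := by
  have hdist : ∀ z ∈ closedBall x R, ‖z - x‖ₑ ≤ ENNReal.ofReal R := fun z hz => by
    rw [← ofReal_norm, ← dist_eq_norm]
    exact ENNReal.ofReal_le_ofReal hz
  have hscale : (ENNReal.ofReal (t ^ finrank ℝ E)⁻¹) ^ (1 / p)
      = ENNReal.ofReal (t ^ (-(finrank ℝ E / p))) := by
    rw [ENNReal.ofReal_rpow_of_nonneg (by positivity) (by simp [hpq.nonneg]), ← Real.rpow_natCast,
      ← Real.rpow_neg ht₀.le, ← Real.rpow_mul ht₀.le, neg_mul, mul_one_div]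
  calc ∫⁻ z in closedBall x R, g (homothety x t z) * ‖z - x‖ₑ ∂μ
      ≤ (∫⁻ z in closedBall x R, g (homothety x t z) ^ p ∂μ) ^ (1 / p)
          * (∫⁻ z in closedBall x R, ‖z - x‖ₑ ^ q ∂μ) ^ (1 / q) :=
        ENNReal.lintegral_mul_le_Lp_mul_Lq _ hpq
          (hg.comp (homothety_continuous x t).measurable).aemeasurable
          (measurable_id.sub_const x).enorm.aemeasurable
    _ ≤ (ENNReal.ofReal (t ^ finrank ℝ E)⁻¹ * ∫⁻ z in closedBall x R, g z ^ p ∂μ) ^ (1 / p)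
          * (∫⁻ _ in closedBall x R, ENNReal.ofReal R ^ q ∂μ) ^ (1 / q) := by
        refine mul_le_mul' (ENNReal.rpow_le_rpow ?_ (by simp [hpq.nonneg]))
          (ENNReal.rpow_le_rpow ?_ (by simp [hpq.symm.nonneg]))
        · exact setLIntegral_closedBall_comp_homothety_le μ (hg.pow_const p) x R ht₀ ht₁
        · exact setLIntegral_mono' measurableSet_closedBall fun z hz =>
            ENNReal.rpow_le_rpow (hdist z hz) hpq.symm.nonneg
    _ = _ := by
        rw [setLIntegral_const, ENNReal.mul_rpow_of_nonneg _ _ (by simp [hpq.nonneg]),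
          ENNReal.mul_rpow_of_nonneg _ _ (by simp [hpq.symm.nonneg]), ← ENNReal.rpow_mul,
          mul_one_div_cancel hpq.symm.ne_zero, ENNReal.rpow_one, hscale]

theorem lintegral_closedBall_enorm_sub_le {F : Type*} [NormedAddCommGroup F] [NormedSpace ℝ F]
    [CompleteSpace F] {f : E → F} {s : Set E} (hs : IsOpen s) (hf : ContDiffOn ℝ 1 f s)
    {x : E} {R : ℝ} (hR : closedBall x R ⊆ s) {p : ℝ} (hp : finrank ℝ E < p) :
    ∫⁻ z in closedBall x R, ‖f z - f x‖ₑ ∂μ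
      ≤ ENNReal.ofReal ((1 - finrank ℝ E / p)⁻¹ * R) * μ (closedBall x R) ^ (1 - 1 / p)
        * eLpNorm (fderiv ℝ f) (ENNReal.ofReal p) (μ.restrict (closedBall x R)) := by
  rcases le_or_gt p 1 with hp₁ | hp₁
  · have : Subsingleton E :=
      finrank_zero_iff.1 (Nat.lt_one_iff.1 (by exact_mod_cast hp.trans_le hp₁))
    simp [Subsingleton.elim _ x]
  set n := finrank ℝ E
  have hpq : p.HolderConjugate p.conjExponent := .conjExponent hp₁
  have hp₀ : 0 < p := hpq.pos
  have hnp : n / p < 1 := (div_lt_one hp₀).2 hp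
  set G : E → ℝ≥0∞ := fun w => ‖fderiv ℝ f w‖ₑ
  have hG : Measurable G := (measurable_fderiv ℝ f).enorm
  set K := (∫⁻ z in closedBall x R, G z ^ p ∂μ) ^ (1 / p)
    * (ENNReal.ofReal R * μ (closedBall x R) ^ (1 / p.conjExponent))
  have hK : eLpNorm (fderiv ℝ f) (ENNReal.ofReal p) (μ.restrict (closedBall x R))
      = (∫⁻ z in closedBall x R, G z ^ p ∂μ) ^ (1 / p) := by
    rw [eLpNorm_eq_lintegral_rpow_enorm_toReal (by simpa using hp₀) ENNReal.ofReal_ne_top,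
      ENNReal.toReal_ofReal hp₀.le]
  have hq : 1 / p.conjExponent = 1 - 1 / p := by
    rw [eq_sub_iff_add_eq', hpq.one_div_add_one_div, div_one]
  calc ∫⁻ z in closedBall x R, ‖f z - f x‖ₑ ∂μ
      ≤ ∫⁻ z in closedBall x R, (∫⁻ t in Icc (0 : ℝ) 1, G (lineMap x z t) * ‖z - x‖ₑ) ∂μ :=
        setLIntegral_mono' measurableSet_closedBall fun z hz =>
          enorm_sub_le_lintegral_fderiv_lineMap hs hf <|
            ((convex_closedBall x R).segment_subset
              (mem_closedBall_self (dist_nonneg.trans hz)) hz).trans hR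
    _ = ∫⁻ t in Ioc (0 : ℝ) 1, ∫⁻ z in closedBall x R, G (homothety x t z) * ‖z - x‖ₑ ∂μ := by
        rw [lintegral_lintegral_swap,
          (restrict_Ioc_eq_restrict_Icc : volume.restrict (Ioc (0 : ℝ) 1) = _)]
        · simp only [homothety_eq_lineMap]
        · have hline : Continuous fun zt : E × ℝ => lineMap x zt.1 zt.2 := by fun_prop
          exact ((hG.comp hline.measurable).mul (measurable_fst.sub_const x).enorm).aemeasurable
    _ ≤ ∫⁻ t in Ioc (0 : ℝ) 1, ENNReal.ofReal (t ^ (-(n / p))) * K :=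
        setLIntegral_mono' measurableSet_Ioc fun t ht => by
          simpa only [mul_assoc] using setLIntegral_closedBall_comp_homothety_mul_enorm_sub_le
            μ hpq hG x R ht.1 ht.2
    _ = _ := by
        rw [lintegral_mul_const _ (by fun_prop), lintegral_Ioc_zero_one_rpow (by linarith), hK,
          ← hq, ENNReal.ofReal_mul (inv_nonneg.2 (by linarith))]
        simp only [K]
        ring_nf

end AddHaar

theorem eLpNorm_gradient_eq_eLpNorm_fderiv {H : Type*} [NormedAddCommGroup H]
    [InnerProductSpace ℝ H] [CompleteSpace H] [MeasurableSpace H] (f : H → ℝ) (p : ℝ≥0∞)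
    (ν : Measure H) : eLpNorm (gradient f) p ν = eLpNorm (fderiv ℝ f) p ν :=
  eLpNorm_congr_norm_ae (.of_forall fun _ => (InnerProductSpace.toDual ℝ H).symm.norm_map _)

theorem abs_sub_Qavg_le {d : ℕ} {v : EuclideanSpace ℝ (Fin d) → ℝ} {δ : ℝ} (hδ : 0 < δ)
    (x : EuclideanSpace ℝ (Fin d)) (hv : IntegrableOn v (closedBall x (δ / 2))) :
    |v x - Qavg δ v x| ≤ (volume (closedBall x (δ / 2))).toReal⁻¹
      * (∫⁻ z in closedBall x (δ / 2), ‖v z - v x‖ₑ).toReal := by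
  have hm : 0 < (volume (closedBall x (δ / 2))).toReal := ENNReal.toReal_pos
    (measure_closedBall_pos volume x (by linarith)).ne' measure_closedBall_lt_top.ne
  have hvx : IntegrableOn (fun z => v z - v x) (closedBall x (δ / 2)) :=
    hv.sub (integrableOn_const measure_closedBall_lt_top.ne)
  have hmean : v x - Qavg δ v x
      = (volume (closedBall x (δ / 2))).toReal⁻¹ * -∫ z in closedBall x (δ / 2), (v z - v x) := by
    rw [Qavg, integral_sub hv (integrableOn_const measure_closedBall_lt_top.ne), setIntegral_const,
      measureReal_def, smul_eq_mul, neg_sub, mul_sub, ← mul_assoc, inv_mul_cancel₀ hm.ne', one_mul]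
  rw [hmean, abs_mul, abs_neg, abs_of_pos (inv_pos.2 hm), ← Real.norm_eq_abs]
  refine mul_le_mul_of_nonneg_left ?_ (inv_nonneg.2 hm.le)
  calc ‖∫ z in closedBall x (δ / 2), (v z - v x)‖
      ≤ ∫ z in closedBall x (δ / 2), ‖v z - v x‖ := norm_integral_le_integral_norm _
    _ = _ := integral_norm_eq_lintegral_enorm hvx.1

theorem pointwise_average_deviation_estimate_general
    {d : ℕ} (p : ℝ) (hdp : (d : ℝ) < p)
    (Ω : Set (EuclideanSpace ℝ (Fin d))) (hΩopen : IsOpen Ω)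
    (y : EuclideanSpace ℝ (Fin d) → ℝ) (hy : ContDiffOn ℝ 1 y Ω)
    (δ : ℝ) (hδ : 0 < δ)
    (x : EuclideanSpace ℝ (Fin d))
    (hball : Metric.closedBall x (δ / 2) ⊆ Ω)
    (hgrad : MemLp (gradient y) (ENNReal.ofReal p)
      (volume.restrict (Metric.closedBall x (δ / 2)))) :
    |y x - Qavg δ y x|
      ≤ (1 - (d : ℝ) / p)⁻¹ * δ *
          (volume (Metric.closedBall x (δ / 2))).toReal ^ (-(1 / p) : ℝ) *
          (eLpNorm (gradient y) (ENNReal.ofReal p)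
            (volume.restrict (Metric.closedBall x (δ / 2)))).toReal := by
  set B := closedBall x (δ / 2)
  set N := eLpNorm (gradient y) (ENNReal.ofReal p) (volume.restrict B)
  have hp : 0 < p := (Nat.cast_nonneg d).trans_lt hdp
  have hcoef : 0 ≤ (1 - (d : ℝ) / p)⁻¹ := inv_nonneg.2 (sub_pos.2 ((div_lt_one hp).2 hdp)).le
  have hB₀ : volume B ≠ 0 := (measure_closedBall_pos volume x (by linarith)).ne'
  have hm : 0 < (volume B).toReal := ENNReal.toReal_pos hB₀ measure_closedBall_lt_top.ne
  have hbound := lintegral_closedBall_enorm_sub_le volume hΩopen hy hball (p := p) (by simpa)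
  rw [← eLpNorm_gradient_eq_eLpNorm_fderiv, finrank_euclideanSpace_fin] at hbound
  calc |y x - Qavg δ y x|
      ≤ (volume B).toReal⁻¹ * (∫⁻ z in B, ‖y z - y x‖ₑ).toReal :=
        abs_sub_Qavg_le hδ x ((hy.continuousOn.mono hball).integrableOn_compact
          (isCompact_closedBall x _))
    _ ≤ (volume B).toReal⁻¹
          * (ENNReal.ofReal ((1 - d / p)⁻¹ * (δ / 2)) * volume B ^ (1 - 1 / p) * N).toReal := by
        gcongr
        exact ENNReal.mul_ne_top (ENNReal.mul_ne_top ENNReal.ofReal_ne_top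
          (ENNReal.rpow_ne_top_of_ne_zero hB₀ measure_closedBall_lt_top.ne)) hgrad.eLpNorm_ne_top
    _ = (1 - (d : ℝ) / p)⁻¹ * (δ / 2) * (volume B).toReal ^ (-(1 / p) : ℝ) * N.toReal := by
        rw [ENNReal.toReal_mul, ENNReal.toReal_mul,
          ENNReal.toReal_ofReal (mul_nonneg hcoef (by linarith)), ← ENNReal.toReal_rpow,
          Real.rpow_sub hm, Real.rpow_one, Real.rpow_neg hm.le]
        field_simp
    _ ≤ _ := by gcongr; linarith

/-- pointwise estimate on the deviation of `y` from its ball average. -/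
theorem pointwise_average_deviation_estimate
    {d : ℕ} (p : ℝ) (hdp : (d : ℝ) < p)
    (Ω : Set (EuclideanSpace ℝ (Fin d))) (hΩopen : IsOpen Ω)
    (y : EuclideanSpace ℝ (Fin d) → ℝ) (hy : ContDiffOn ℝ 1 y Ω)
    (δ : ℝ) (hδ : 0 < δ)
    (x : EuclideanSpace ℝ (Fin d)) (hxΩ : x ∈ Ω)
    (hball : Metric.closedBall x (δ / 2) ⊆ Ω)
    (hgrad : MemLp (gradient y) (ENNReal.ofReal p)
      (volume.restrict (Metric.closedBall x (δ / 2)))) :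
    |y x - Qavg δ y x|
      ≤ (1 - (d : ℝ) / p)⁻¹ * δ *
          (volume (Metric.closedBall x (δ / 2))).toReal ^ (-(1 / p) : ℝ) *
          (eLpNorm (gradient y) (ENNReal.ofReal p)
            (volume.restrict (Metric.closedBall x (δ / 2)))).toReal :=
  pointwise_average_deviation_estimate_general p hdp Ω hΩopen y hy δ hδ x hball hgrad
end

section
/- Let Ω ⊆ ℝ^d be a bounded open set, let d < p < ∞, and let y : Ω → ℝ be continuously differentiable with y ∈ L²(Ω) and ∇y ∈ L^p(Ω). Then there exists a constant C < ∞, depending only on d, p and the Lebesgue measure |Ω|, such that for all δ > 0, ‖y − Q_δ y‖_{L²(Ω_δ)} ≤ C · ‖∇y‖_{L^p(Ω)} · δ^{1 − d/p}. -/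
/-!
Fix `x ∈ Ω_δ` and the ball `B = B(x, r) ⊆ Ω`, `r = δ/2`. The fundamental theorem of calculus along
the rays from `x` gives `|y z - y x| ≤ r ∫₀¹ |∇y (x + t (z - x))| dt` for `z ∈ B`. Averaging over
`z ∈ B`, swapping the integrals and rescaling `B` to `B(x, t r)` turns the inner integral into
`t⁻ᵈ ∫_{B(x, t r)} |∇y|`, which Hölder's inequality bounds by `‖∇y‖_p |B|^{1 - 1/p} t^{-d/p}`.
Since `d < p`, the weight `t^{-d/p}` is integrable on `(0, 1]`, and we obtain the Morrey-type
estimate `|y x - Q_δ y x| ≤ C ‖∇y‖_p r^{1 - d/p}` uniformly in `x ∈ Ω_δ`. Integrating its square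
over `Ω_δ ⊆ Ω` costs the factor `|Ω|^{1/2}`.
-/

open MeasureTheory

open Set Metric Module
open scoped ENNReal Pointwise

section Measure

variable {α E : Type*} [MeasurableSpace α] [NormedAddCommGroup E] {μ : Measure α}

theorem norm_sub_setAverage_le [NormedSpace ℝ E] [CompleteSpace E] {s : Set α} (hs₀ : μ s ≠ 0)
    (hs : μ s ≠ ∞) {f : α → E} (hf : IntegrableOn f s μ) (c : E) :
    ‖c - ⨍ z in s, f z ∂μ‖ ≤ (μ.real s)⁻¹ * ∫ z in s, ‖f z - c‖ ∂μ := by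
  have hdev : c - ⨍ z in s, f z ∂μ = (μ.real s)⁻¹ • ∫ z in s, (c - f z) ∂μ := by
    rw [setAverage_eq, integral_sub (integrableOn_const (C := c) hs) hf, setIntegral_const,
      smul_sub, inv_smul_smul₀ (show μ.real s ≠ 0 from ENNReal.toReal_ne_zero.2 ⟨hs₀, hs⟩)]
  rw [hdev, norm_smul, norm_inv, Real.norm_of_nonneg measureReal_nonneg]
  gcongr
  simpa only [norm_sub_rev] using norm_integral_le_integral_norm (μ := μ.restrict s) (c - f ·)

theorem setIntegral_norm_le_eLpNorm_mul_measureReal_rpow {f : α → E} {p : ℝ} (hp : 1 ≤ p)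
    {s t : Set α} (hst : s ⊆ t) (hs : μ s ≠ ∞) (hf : MemLp f (ENNReal.ofReal p) (μ.restrict t)) :
    ∫ x in s, ‖f x‖ ∂μ
      ≤ (eLpNorm f (ENNReal.ofReal p) (μ.restrict t)).toReal * μ.real s ^ (1 - 1 / p) := by
  have hμst : μ.restrict s ≤ μ.restrict t := Measure.restrict_mono hst le_rfl
  have hfs : AEStronglyMeasurable f (μ.restrict s) := hf.1.mono_measure hμst
  have hHolder : eLpNorm f 1 (μ.restrict s)
      ≤ eLpNorm f (ENNReal.ofReal p) (μ.restrict t) * μ s ^ (1 - 1 / p) := by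
    refine (eLpNorm_le_eLpNorm_mul_rpow_measure_univ (q := ENNReal.ofReal p)
      (by simpa using hp) hfs).trans ?_
    rw [Measure.restrict_apply_univ, ENNReal.toReal_ofReal (by linarith), ENNReal.toReal_one,
      div_one]
    gcongr
  rw [integral_norm_eq_lintegral_enorm hfs, ← eLpNorm_one_eq_lintegral_enorm, measureReal_def,
    ENNReal.toReal_rpow, ← ENNReal.toReal_mul]
  refine ENNReal.toReal_mono (ENNReal.mul_ne_top hf.2.ne ?_) hHolder
  exact ENNReal.rpow_ne_top_of_nonneg (sub_nonneg.2 (div_le_one_of_le₀ hp (by linarith))) hs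

theorem toReal_eLpNorm_restrict_le_of_norm_le {s : Set α} (hs : MeasurableSet s) (hμs : μ s ≠ ∞)
    {f : α → E} {C : ℝ} (hC : 0 ≤ C) (hf : ∀ x ∈ s, ‖f x‖ ≤ C) (p : ℝ≥0∞) :
    (eLpNorm f p (μ.restrict s)).toReal ≤ μ.real s ^ p.toReal⁻¹ * C := by
  have hbound := eLpNorm_le_of_ae_bound (p := p) ((ae_restrict_iff' hs).2 (ae_of_all μ hf))
  rw [Measure.restrict_apply_univ] at hbound
  have hfin : μ s ^ p.toReal⁻¹ * ENNReal.ofReal C ≠ ∞ :=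
    ENNReal.mul_ne_top (ENNReal.rpow_ne_top_of_nonneg (by positivity) hμs) ENNReal.ofReal_ne_top
  simpa only [ENNReal.toReal_mul, ENNReal.toReal_ofReal hC, ← ENNReal.toReal_rpow,
    measureReal_def] using ENNReal.toReal_mono hfin hbound

end Measure

theorem integral_Ioc_zero_one_rpow {s : ℝ} (hs : -1 < s) :
    ∫ t in Ioc (0 : ℝ) 1, t ^ s = (s + 1)⁻¹ := by
  rw [← intervalIntegral.integral_of_le zero_le_one, integral_rpow (.inl hs),
    Real.zero_rpow (by linarith), Real.one_rpow, sub_zero, one_div]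

section NormedSpace

variable {E F : Type*} [NormedAddCommGroup E] [NormedAddCommGroup F]

theorem setIntegral_closedBall_comp_sub [NormedSpace ℝ F] [MeasurableSpace E] [BorelSpace E]
    (μ : Measure E) [μ.IsAddRightInvariant] (g : E → F) (x : E) (r : ℝ) :
    ∫ z in closedBall x r, g (z - x) ∂μ = ∫ u in closedBall 0 r, g u ∂μ := by
  rw [← (measurePreserving_add_right μ x).setIntegral_preimage_emb
    (measurableEmbedding_addRight x)]
  simp

variable [NormedSpace ℝ E]

theorem norm_sub_le_integral_norm_fderiv [NormedSpace ℝ F] {f : E → F} {s : Set E}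
    (hs : IsOpen s) (hf : ContDiffOn ℝ 1 f s) {a b : E} (hab : segment ℝ a b ⊆ s) :
    ‖f b - f a‖ ≤ ‖b - a‖ * ∫ t in (0 : ℝ)..1, ‖fderiv ℝ f (a + t • (b - a))‖ := by
  set γ : ℝ → E := fun t ↦ a + t • (b - a)
  have hγ : ∀ t ∈ Icc (0 : ℝ) 1, γ t ∈ s := fun t ht ↦
    hab (segment_eq_image' ℝ a b ▸ mem_image_of_mem _ ht)
  have hγ' (t : ℝ) : HasDerivAt γ (b - a) t := by
    simpa only [one_smul] using ((hasDerivAt_id' t).smul_const (b - a)).const_add a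
  have hDf : ContinuousOn (fun t ↦ ‖fderiv ℝ f (γ t)‖) (Icc 0 1) :=
    ((hf.continuousOn_fderiv_of_isOpen hs le_rfl).comp (by fun_prop) hγ).norm
  have hderiv : ∀ t ∈ Ioo (0 : ℝ) 1, HasDerivAt (f ∘ γ) (fderiv ℝ f (γ t) (b - a)) t :=
    fun t ht ↦ ((hf.differentiableOn one_ne_zero).differentiableAt
      (hs.mem_nhds (hγ t (Ioo_subset_Icc_self ht)))).hasFDerivAt.comp_hasDerivAt t (hγ' t)
  rw [← intervalIntegral.integral_const_mul]
  simpa [γ, mul_comm] using norm_sub_le_integral_of_norm_deriv_le_of_le zero_le_one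
    (f := f ∘ γ) (B := fun t ↦ ‖fderiv ℝ f (γ t)‖ * ‖b - a‖)
    (hf.continuousOn.comp (by fun_prop) hγ)
    (fun t ht ↦ (hderiv t ht).differentiableAt.differentiableWithinAt)
    (.of_forall fun t ht ↦ (hderiv t ht).deriv ▸ (fderiv ℝ f (γ t)).le_opNorm _)
    ((hDf.mul continuousOn_const).intervalIntegrable_of_Icc zero_le_one)

variable [MeasurableSpace E] [BorelSpace E] [FiniteDimensional ℝ E] (μ : Measure E)
  [μ.IsAddHaarMeasure]

theorem setIntegral_closedBall_comp_homothety [NormedSpace ℝ F] (f : E → F) (x : E) {r t : ℝ}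
    (hr : 0 ≤ r) (ht : 0 < t) :
    ∫ z in closedBall x r, f (x + t • (z - x)) ∂μ
      = (t ^ finrank ℝ E)⁻¹ • ∫ w in closedBall x (t * r), f w ∂μ := by
  have hball : t • closedBall (0 : E) r = closedBall 0 (t * r) := by
    simp [smul_closedBall t (0 : E) hr, abs_of_pos ht]
  rw [setIntegral_closedBall_comp_sub μ (fun u ↦ f (x + t • u)),
    Measure.setIntegral_comp_smul_of_pos μ (fun u ↦ f (x + u)) _ ht, hball,
    ← setIntegral_closedBall_comp_sub μ (fun u ↦ f (x + u)) x]
  simp only [add_sub_cancel]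

theorem setIntegral_closedBall_norm_comp_homothety_le {f : E → F} {p : ℝ} (hp : 1 ≤ p)
    {Ω : Set E} {x : E} {r : ℝ} (hr : 0 ≤ r) (hball : closedBall x r ⊆ Ω)
    (hf : MemLp f (ENNReal.ofReal p) (μ.restrict Ω)) {t : ℝ} (ht : t ∈ Ioc 0 1) :
    ∫ z in closedBall x r, ‖f (x + t • (z - x))‖ ∂μ
      ≤ (eLpNorm f (ENNReal.ofReal p) (μ.restrict Ω)).toReal
          * μ.real (closedBall x r) ^ (1 - 1 / p) * t ^ (-(finrank ℝ E / p : ℝ)) := by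
  set d := finrank ℝ E
  set N := (eLpNorm f (ENNReal.ofReal p) (μ.restrict Ω)).toReal
  have ht₀ : 0 ≤ t := ht.1.le
  have hvol : μ.real (closedBall x (t * r)) = t ^ d * μ.real (closedBall x r) := by
    rw [Measure.addHaar_real_closedBall' μ x (mul_nonneg ht₀ hr),
      Measure.addHaar_real_closedBall' μ x hr, mul_pow, mul_assoc]
  have hHolder := setIntegral_norm_le_eLpNorm_mul_measureReal_rpow hp
    ((closedBall_subset_closedBall (mul_le_of_le_one_left hr ht.2)).trans hball)
    measure_closedBall_lt_top.ne hf
  rw [setIntegral_closedBall_comp_homothety μ (‖f ·‖) x hr ht.1, smul_eq_mul]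
  calc (t ^ d)⁻¹ * ∫ w in closedBall x (t * r), ‖f w‖ ∂μ
      ≤ (t ^ d)⁻¹ * (N * (t ^ d * μ.real (closedBall x r)) ^ (1 - 1 / p)) := by
        rw [← hvol]; gcongr
    _ = N * μ.real (closedBall x r) ^ (1 - 1 / p) * t ^ (-(d / p : ℝ)) := by
        have hexp : t ^ (-(d / p : ℝ)) = (t ^ d)⁻¹ * t ^ (d * (1 - 1 / p) : ℝ) := by
          rw [← Real.rpow_natCast, ← Real.rpow_neg ht₀, ← Real.rpow_add ht.1]
          ring_nf
        rw [hexp, Real.mul_rpow (by positivity) measureReal_nonneg, ← Real.rpow_natCast,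
          ← Real.rpow_mul ht₀]
        ring

variable [NormedSpace ℝ F] {Ω : Set E} (hΩ : IsOpen Ω) {y : E → F} (hy : ContDiffOn ℝ 1 y Ω)
  {p : ℝ} (hp : 1 ≤ p) (hdp : finrank ℝ E < p)
  (hgrad : MemLp (fderiv ℝ y) (ENNReal.ofReal p) (μ.restrict Ω)) {x : E} {r : ℝ}
include hΩ hy hp hdp hgrad

theorem setIntegral_norm_sub_le_of_closedBall_subset (hr : 0 ≤ r) (hball : closedBall x r ⊆ Ω) :
    ∫ z in closedBall x r, ‖y z - y x‖ ∂μ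
      ≤ (1 - finrank ℝ E / p)⁻¹ * r
          * (eLpNorm (fderiv ℝ y) (ENNReal.ofReal p) (μ.restrict Ω)).toReal
          * μ.real (closedBall x r) ^ (1 - 1 / p) := by
  set B := closedBall x r
  set G : E × ℝ → ℝ := fun w ↦ ‖fderiv ℝ y (x + w.2 • (w.1 - x))‖
  set c := (eLpNorm (fderiv ℝ y) (ENNReal.ofReal p) (μ.restrict Ω)).toReal
    * μ.real B ^ (1 - 1 / p)
  have hdp' : finrank ℝ E / p < 1 := (div_lt_one (by linarith)).2 hdp
  have hG : Integrable G ((μ.restrict B).prod (volume.restrict (Ioc 0 1))) := by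
    rw [Measure.prod_restrict]
    refine (ContinuousOn.integrableOn_compact ((isCompact_closedBall x r).prod isCompact_Icc)
      ?_).mono_set (prod_mono subset_rfl Ioc_subset_Icc_self)
    refine ((hy.continuousOn_fderiv_of_isOpen hΩ le_rfl).comp (by fun_prop) ?_).norm
    exact fun w hw ↦
      hball ((convex_closedBall x r).add_smul_sub_mem (mem_closedBall_self hr) hw.1 hw.2)
  have hFTC : ∀ z ∈ B, ‖y z - y x‖ ≤ r * ∫ t in Ioc (0 : ℝ) 1, G (z, t) := by
    intro z hz
    have hseg := ((convex_closedBall x r).segment_subset (mem_closedBall_self hr) hz).trans hball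
    calc ‖y z - y x‖ ≤ ‖z - x‖ * ∫ t in Ioc (0 : ℝ) 1, G (z, t) := by
          simpa only [intervalIntegral.integral_of_le zero_le_one]
            using norm_sub_le_integral_norm_fderiv hΩ hy hseg
      _ ≤ r * ∫ t in Ioc (0 : ℝ) 1, G (z, t) :=
          mul_le_mul_of_nonneg_right (mem_closedBall_iff_norm.1 hz)
            (integral_nonneg fun (t : ℝ) ↦ norm_nonneg _)
  calc ∫ z in B, ‖y z - y x‖ ∂μ
      ≤ ∫ z in B, r * (∫ t in Ioc (0 : ℝ) 1, G (z, t)) ∂μ :=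
        setIntegral_mono_on
          (((hy.continuousOn.mono hball).sub continuousOn_const).norm.integrableOn_compact
            (isCompact_closedBall x r))
          (hG.integral_prod_left.const_mul r) measurableSet_closedBall hFTC
    _ = r * ∫ t in Ioc (0 : ℝ) 1, ∫ z in B, G (z, t) ∂μ := by
        rw [integral_const_mul, integral_integral_swap hG]
    _ ≤ r * ∫ t in Ioc (0 : ℝ) 1, c * t ^ (-(finrank ℝ E / p : ℝ)) := by
        refine mul_le_mul_of_nonneg_left (setIntegral_mono_on hG.integral_prod_right ?_
          measurableSet_Ioc fun t ht ↦
            setIntegral_closedBall_norm_comp_homothety_le μ hp hr hball hgrad ht) hr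
        exact ((intervalIntegrable_iff_integrableOn_Ioc_of_le zero_le_one).1
          (intervalIntegral.intervalIntegrable_rpow' (by linarith))).const_mul c
    _ = _ := by
        rw [integral_const_mul, integral_Ioc_zero_one_rpow (by linarith)]
        ring

theorem norm_sub_setAverage_closedBall_le [CompleteSpace F] (hr : 0 < r)
    (hball : closedBall x r ⊆ Ω) :
    ‖y x - ⨍ z in closedBall x r, y z ∂μ‖
      ≤ (1 - finrank ℝ E / p)⁻¹ * (eLpNorm (fderiv ℝ y) (ENNReal.ofReal p) (μ.restrict Ω)).toReal
          * μ.real (closedBall (0 : E) 1) ^ (-(1 / p)) * r ^ (1 - finrank ℝ E / p) := by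
  set d := finrank ℝ E
  set V := μ.real (closedBall x r)
  set c := μ.real (closedBall (0 : E) 1)
  set N := (eLpNorm (fderiv ℝ y) (ENNReal.ofReal p) (μ.restrict Ω)).toReal
  have hc : 0 < c :=
    ENNReal.toReal_pos (measure_closedBall_pos μ 0 one_pos).ne' measure_closedBall_lt_top.ne
  have hV : V = r ^ d * c := Measure.addHaar_real_closedBall' μ x hr.le
  have hscale : V⁻¹ * V ^ (1 - 1 / p) * r = c ^ (-(1 / p)) * r ^ (1 - d / p) := by
    have hVp : V⁻¹ * V ^ (1 - 1 / p) = V ^ (-(1 / p)) := by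
      rw [← Real.rpow_neg_one, ← Real.rpow_add (hV ▸ by positivity)]
      ring_nf
    rw [hVp, hV, Real.mul_rpow (by positivity) hc.le, ← Real.rpow_natCast,
      ← Real.rpow_mul hr.le, mul_right_comm, ← Real.rpow_add_one hr.ne']
    ring_nf
  refine (norm_sub_setAverage_le (measure_closedBall_pos μ x hr).ne' measure_closedBall_lt_top.ne
    ((hy.continuousOn.mono hball).integrableOn_compact (isCompact_closedBall x r)) (y x)).trans ?_
  calc V⁻¹ * ∫ z in closedBall x r, ‖y z - y x‖ ∂μ
      ≤ V⁻¹ * ((1 - d / p)⁻¹ * r * N * V ^ (1 - 1 / p)) := by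
        gcongr
        exact setIntegral_norm_sub_le_of_closedBall_subset μ hΩ hy hp hdp hgrad hr.le hball
    _ = _ := by linear_combination (1 - d / p)⁻¹ * N * hscale

end NormedSpace

section Gradient

variable {F : Type*} [NormedAddCommGroup F] [InnerProductSpace ℝ F] [CompleteSpace F]
  [MeasurableSpace F] {μ : Measure F} {f : F → ℝ} {p : ℝ≥0∞}

theorem eLpNorm_fderiv_eq_eLpNorm_gradient :
    eLpNorm (fderiv ℝ f) p μ = eLpNorm (gradient f) p μ :=
  eLpNorm_congr_norm_ae <| ae_of_all μ fun w ↦ by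
    rw [← toDual_gradient, LinearIsometryEquiv.norm_map]

theorem MeasureTheory.MemLp.fderiv_of_gradient (h : MemLp (gradient f) p μ) :
    MemLp (fderiv ℝ f) p μ := by
  refine ⟨?_, eLpNorm_fderiv_eq_eLpNorm_gradient.trans_lt h.2⟩
  rw [← toDual_comp_gradient (𝕜 := ℝ)]
  exact (InnerProductSpace.toDual ℝ F).continuous.comp_aestronglyMeasurable h.1

end Gradient

section Averaging

variable {d : ℕ}

theorem Qavg_eq_setAverage (δ : ℝ) (v : EuclideanSpace ℝ (Fin d) → ℝ)
    (x : EuclideanSpace ℝ (Fin d)) : Qavg δ v x = ⨍ z in closedBall x (δ / 2), v z := by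
  rw [setAverage_eq, smul_eq_mul]
  rfl

theorem isOpen_OmegaDelta {Ω : Set (EuclideanSpace ℝ (Fin d))} (hΩ : IsOpen Ω) (δ : ℝ) :
    IsOpen (OmegaDelta Ω δ) :=
  hΩ.inter (isOpen_lt continuous_const (continuous_infDist_pt _))

theorem closedBall_subset_of_mem_OmegaDelta {Ω : Set (EuclideanSpace ℝ (Fin d))} {δ : ℝ}
    {x : EuclideanSpace ℝ (Fin d)} (hx : x ∈ OmegaDelta Ω δ) : closedBall x (δ / 2) ⊆ Ω :=
  disjoint_compl_right_iff_subset.1 (disjoint_closedBall_of_lt_infDist hx.2)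

theorem Qavg_fin_zero {δ : ℝ} (hδ : 0 < δ) (v : EuclideanSpace ℝ (Fin 0) → ℝ)
    (x : EuclideanSpace ℝ (Fin 0)) : Qavg δ v x = v x := by
  have hconst : v = fun _ ↦ v x := funext fun z ↦ congrArg v (Subsingleton.elim z x)
  rw [Qavg_eq_setAverage, hconst, setAverage_const
    (measure_closedBall_pos volume x (by positivity)).ne' measure_closedBall_lt_top.ne]

theorem norm_sub_Qavg_le {Ω : Set (EuclideanSpace ℝ (Fin d))} (hΩ : IsOpen Ω)
    {y : EuclideanSpace ℝ (Fin d) → ℝ} (hy : ContDiffOn ℝ 1 y Ω) {p : ℝ} (hp : 1 ≤ p)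
    (hdp : (d : ℝ) < p) (hgrad : MemLp (gradient y) (ENNReal.ofReal p) (volume.restrict Ω))
    {δ : ℝ} (hδ : 0 < δ) {x : EuclideanSpace ℝ (Fin d)} (hx : x ∈ OmegaDelta Ω δ) :
    ‖y x - Qavg δ y x‖
      ≤ (1 - (d : ℝ) / p)⁻¹ * (eLpNorm (gradient y) (ENNReal.ofReal p) (volume.restrict Ω)).toReal
          * volume.real (closedBall (0 : EuclideanSpace ℝ (Fin d)) 1) ^ (-(1 / p))
          * (δ / 2) ^ (1 - (d : ℝ) / p) := by
  simpa only [Qavg_eq_setAverage, eLpNorm_fderiv_eq_eLpNorm_gradient,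
    finrank_euclideanSpace_fin] using norm_sub_setAverage_closedBall_le volume hΩ hy hp
      (by simpa using hdp) hgrad.fderiv_of_gradient (by positivity)
      (closedBall_subset_of_mem_OmegaDelta hx)

end Averaging

theorem average_deviation_decay_general
    {d : ℕ} (Ω : Set (EuclideanSpace ℝ (Fin d)))
    (hΩopen : IsOpen Ω) (hΩbdd : Bornology.IsBounded Ω)
    (p : ℝ) (hdp : (d : ℝ) < p)
    (y : EuclideanSpace ℝ (Fin d) → ℝ) (hy : ContDiffOn ℝ 1 y Ω)
    (hgrad : MemLp (gradient y) (ENNReal.ofReal p) (volume.restrict Ω)) :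
    ∃ C : ℝ, ∀ δ : ℝ, 0 < δ →
      (eLpNorm (fun x => y x - Qavg δ y x) 2 (volume.restrict (OmegaDelta Ω δ))).toReal
        ≤ C * (eLpNorm (gradient y) (ENNReal.ofReal p) (volume.restrict Ω)).toReal *
            δ ^ (1 - (d : ℝ) / p) := by
  -- In dimension `0` every function is constant; otherwise `d < p` gives the `1 ≤ p` Hölder needs.
  rcases Nat.eq_zero_or_pos d with rfl | hd
  · exact ⟨0, fun δ hδ ↦ by simp [Qavg_fin_zero hδ]⟩
  have hp : 1 ≤ p := le_trans (by exact_mod_cast hd) hdp.le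
  set N := (eLpNorm (gradient y) (ENNReal.ofReal p) (volume.restrict Ω)).toReal
  set c := volume.real (closedBall (0 : EuclideanSpace ℝ (Fin d)) 1)
  have hΩfin : volume Ω ≠ ∞ := hΩbdd.measure_lt_top.ne
  refine ⟨volume.real Ω ^ (2⁻¹ : ℝ) * (1 - (d : ℝ) / p)⁻¹ * c ^ (-(1 / p))
    / 2 ^ (1 - (d : ℝ) / p), fun δ hδ ↦ ?_⟩
  set M := (1 - (d : ℝ) / p)⁻¹ * N * c ^ (-(1 / p)) * (δ / 2) ^ (1 - (d : ℝ) / p) with hM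
  have hM₀ : 0 ≤ M := by
    have : 0 ≤ (1 - (d : ℝ) / p)⁻¹ :=
      inv_nonneg.2 (sub_nonneg.2 ((div_le_one (by linarith)).2 hdp.le))
    positivity
  calc (eLpNorm (fun x ↦ y x - Qavg δ y x) 2 (volume.restrict (OmegaDelta Ω δ))).toReal
      ≤ volume.real (OmegaDelta Ω δ) ^ (2⁻¹ : ℝ) * M := by
        simpa using toReal_eLpNorm_restrict_le_of_norm_le
          (isOpen_OmegaDelta hΩopen δ).measurableSet
          (measure_ne_top_of_subset (sep_subset _ _) hΩfin) hM₀
          (fun x hx ↦ norm_sub_Qavg_le hΩopen hy hp hdp hgrad hδ hx) 2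
    _ ≤ volume.real Ω ^ (2⁻¹ : ℝ) * M := by
        gcongr
        exact sep_subset _ _
    _ = _ := by
        rw [hM, Real.div_rpow hδ.le zero_le_two]
        ring

/-- `‖y − Q_δ y‖_{L²(Ω_δ)} = O(δ^{1 − d/p})`. -/
theorem average_deviation_decay
    {d : ℕ} (Ω : Set (EuclideanSpace ℝ (Fin d)))
    (hΩopen : IsOpen Ω) (hΩbdd : Bornology.IsBounded Ω)
    (p : ℝ) (hdp : (d : ℝ) < p)
    (y : EuclideanSpace ℝ (Fin d) → ℝ) (hy : ContDiffOn ℝ 1 y Ω)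
    (hyL2 : MemLp y 2 (volume.restrict Ω))
    (hgrad : MemLp (gradient y) (ENNReal.ofReal p) (volume.restrict Ω)) :
    ∃ C : ℝ, ∀ δ : ℝ, 0 < δ →
      (eLpNorm (fun x => y x - Qavg δ y x) 2 (volume.restrict (OmegaDelta Ω δ))).toReal
        ≤ C * (eLpNorm (gradient y) (ENNReal.ofReal p) (volume.restrict Ω)).toReal *
            δ ^ (1 - (d : ℝ) / p) :=
  average_deviation_decay_general Ω hΩopen hΩbdd p hdp y hy hgrad
end

section
/- Let Ω ⊆ ℝ² be a measurable set with 0 < |Ω| < ∞, let K : Ω → ℝ be measurable with 0 < α ≤ K(x) ≤ β for all x ∈ Ω, let q ∈ L²(Ω), and fix i ∈ {1,2}. Let u : Ω → ℝ be a differentiable function with u ∈ L²(Ω), ∇u ∈ L²(Ω; ℝ²), and ∫_Ω ∂u/∂x_i dx = 0. Define K̃_{ii} := |Ω|⁻¹ ∫_Ω K(x)·|∇u(x) + e_i|² dx − |Ω|⁻¹ ∫_Ω q(x)·u(x) dx. If |Ω|⁻¹·(α·‖∇u‖²_{L²(Ω)} − ‖q‖_{L²(Ω)}·‖u‖_{L²(Ω)})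 ≥ −α/2, then K̃_{ii} ≥ α/2. Moreover, the averaged flux κ := |Ω|⁻¹ ∫_Ω K(x)·(∂u/∂x_i(x) + 1) dx satisfies |κ| ≤ β·(1 + |Ω|^{−1/2}·‖∂u/∂x_i‖_{L²(Ω)}). -/
/-!
Both bounds are Cauchy–Schwarz in `L²(Ω)`. Since `∫ ∂ᵢu = 0`, the cross term of
`|∇u + eᵢ|² = |∇u|² + 2 ∂ᵢu + 1` integrates to zero, so `K ≥ α` gives
`∫ K |∇u + eᵢ|² ≥ α (‖∇u‖² + |Ω|)`, while `∫ q u ≤ ‖q‖ ‖u‖`; the amplitude assumption on `q`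
then leaves at least `α - α/2`. For the flux, `|K| ≤ β` and `∫ |∂ᵢu| ≤ |Ω|^{1/2} ‖∂ᵢu‖`.
-/

open MeasureTheory
open scoped ENNReal

section L2Bounds

variable {X : Type*} [MeasurableSpace X] {μ : Measure X}

lemma integral_norm_le_toReal_eLpNorm_two_mul {F : Type*} [NormedAddCommGroup F]
    [IsFiniteMeasure μ] {f : X → F} (hf : MemLp f 2 μ) :
    ∫ x, ‖f x‖ ∂μ ≤ (eLpNorm f 2 μ).toReal * μ.real Set.univ ^ (1 / 2 : ℝ) := by
  have h := eLpNorm_le_eLpNorm_mul_rpow_measure_univ one_le_two hf.aestronglyMeasurable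
  rw [show 1 / (1 : ℝ≥0∞).toReal - 1 / (2 : ℝ≥0∞).toReal = 1 / 2 by norm_num] at h
  have hfin : eLpNorm f 2 μ * μ Set.univ ^ (1 / 2 : ℝ) ≠ ⊤ :=
    ENNReal.mul_ne_top hf.eLpNorm_ne_top (by simp [measure_ne_top])
  rw [← lpNorm_one_eq_integral_norm hf.aestronglyMeasurable,
    ← toReal_eLpNorm hf.aestronglyMeasurable]
  simpa [ENNReal.toReal_mul, ← ENNReal.toReal_rpow, measureReal_def] using
    ENNReal.toReal_mono hfin h

variable {E : Type*} [NormedAddCommGroup E] [InnerProductSpace ℝ E]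

lemma integral_inner_eq_inner_toLp {f g : X → E} (hf : MemLp f 2 μ) (hg : MemLp g 2 μ) :
    ∫ x, inner ℝ (f x) (g x) ∂μ = inner ℝ (hf.toLp f) (hg.toLp g) := by
  rw [L2.inner_def]
  refine integral_congr_ae ?_
  filter_upwards [hf.coeFn_toLp, hg.coeFn_toLp] with x hfx hgx
  rw [hfx, hgx]

lemma integral_inner_le_toReal_eLpNorm_mul {f g : X → E} (hf : MemLp f 2 μ) (hg : MemLp g 2 μ) :
    ∫ x, inner ℝ (f x) (g x) ∂μ ≤ (eLpNorm f 2 μ).toReal * (eLpNorm g 2 μ).toReal := by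
  rw [integral_inner_eq_inner_toLp hf hg, ← Lp.norm_toLp f hf, ← Lp.norm_toLp g hg]
  exact real_inner_le_norm _ _

lemma integral_norm_sq_eq_toReal_eLpNorm_sq {f : X → E} (hf : MemLp f 2 μ) :
    ∫ x, ‖f x‖ ^ 2 ∂μ = (eLpNorm f 2 μ).toReal ^ 2 := by
  simp_rw [← real_inner_self_eq_norm_sq]
  rw [integral_inner_eq_inner_toLp hf hf, real_inner_self_eq_norm_sq, Lp.norm_toLp f hf]

lemma integral_norm_add_const_sq [IsFiniteMeasure μ] {f : X → E} (hf : MemLp f 2 μ) {c : E}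
    (hfc : ∫ x, inner ℝ (f x) c ∂μ = 0) :
    ∫ x, ‖f x + c‖ ^ 2 ∂μ = (eLpNorm f 2 μ).toReal ^ 2 + μ.real Set.univ * ‖c‖ ^ 2 := by
  have hsq : Integrable (fun x => ‖f x‖ ^ 2) μ := hf.integrable_norm_pow two_ne_zero
  have hinner : Integrable (fun x => 2 * inner ℝ (f x) c) μ :=
    ((hf.integrable one_le_two).inner_const c).const_mul 2
  simp_rw [norm_add_sq_real]
  rw [integral_add (hsq.fun_add hinner) (integrable_const _), integral_add hsq hinner,
    integral_const_mul, hfc, integral_norm_sq_eq_toReal_eLpNorm_sq hf, integral_const, smul_eq_mul]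
  ring

end L2Bounds

section WeightedIntegrals

variable {X : Type*} [MeasurableSpace X] {μ : Measure X} [IsFiniteMeasure μ]
  {K : X → ℝ} {α β : ℝ}

lemma mul_add_le_integral_mul_norm_add_sq {E : Type*} [NormedAddCommGroup E]
    [InnerProductSpace ℝ E] (hK : AEStronglyMeasurable K μ) (hKα : ∀ᵐ x ∂μ, α ≤ K x)
    (hKβ : ∀ᵐ x ∂μ, ‖K x‖ ≤ β) {f : X → E} (hf : MemLp f 2 μ) {c : E}
    (hfc : ∫ x, inner ℝ (f x) c ∂μ = 0) :
    α * ((eLpNorm f 2 μ).toReal ^ 2 + μ.real Set.univ * ‖c‖ ^ 2) ≤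
      ∫ x, K x * ‖f x + c‖ ^ 2 ∂μ := by
  have hsq : Integrable (fun x => ‖f x + c‖ ^ 2) μ :=
    (hf.add (memLp_const c)).integrable_norm_pow two_ne_zero
  rw [← integral_norm_add_const_sq hf hfc, ← integral_const_mul]
  refine integral_mono_ae (hsq.const_mul α) (hsq.bdd_mul hK hKβ) ?_
  filter_upwards [hKα] with x hx
  exact mul_le_mul_of_nonneg_right hx (sq_nonneg _)

lemma abs_integral_mul_add_one_le (hKβ : ∀ᵐ x ∂μ, ‖K x‖ ≤ β) {h : X → ℝ} (hh : MemLp h 2 μ) :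
    |∫ x, K x * (h x + 1) ∂μ| ≤
      β * ((eLpNorm h 2 μ).toReal * μ.real Set.univ ^ (1 / 2 : ℝ) + μ.real Set.univ) := by
  rcases eq_or_ne μ 0 with rfl | hμ
  · simp
  have : NeZero μ := ⟨hμ⟩
  obtain ⟨x₀, hx₀⟩ := hKβ.exists
  have hβ : 0 ≤ β := (norm_nonneg _).trans hx₀
  have hnorm : Integrable (fun x => ‖h x‖) μ := (hh.integrable one_le_two).norm
  have hpt : ∀ᵐ x ∂μ, ‖K x * (h x + 1)‖ ≤ β * (‖h x‖ + 1) := by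
    filter_upwards [hKβ] with x hx
    rw [norm_mul]
    gcongr
    exact (norm_add_le _ _).trans (by simp)
  calc |∫ x, K x * (h x + 1) ∂μ|
      ≤ ∫ x, β * (‖h x‖ + 1) ∂μ :=
        norm_integral_le_of_norm_le ((hnorm.add (integrable_const 1)).const_mul β) hpt
    _ = β * (∫ x, ‖h x‖ ∂μ + μ.real Set.univ) := by
        rw [integral_const_mul, integral_add hnorm (integrable_const 1), integral_const,
          smul_eq_mul, mul_one]
    _ ≤ _ := by
        gcongr
        exact integral_norm_le_toReal_eLpNorm_two_mul hh

lemma abs_inv_mul_integral_mul_add_one_le (hμ : 0 < μ.real Set.univ)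
    (hKβ : ∀ᵐ x ∂μ, ‖K x‖ ≤ β) {h : X → ℝ} (hh : MemLp h 2 μ) :
    |(μ.real Set.univ)⁻¹ * ∫ x, K x * (h x + 1) ∂μ| ≤
      β * (1 + μ.real Set.univ ^ (-(1 / 2) : ℝ) * (eLpNorm h 2 μ).toReal) := by
  set V := μ.real Set.univ
  have hsqrt : V ^ (1 / 2 : ℝ) * V ^ (1 / 2 : ℝ) = V := by
    rw [← Real.rpow_add hμ]
    norm_num
  have hsqrt_pos : 0 < V ^ (1 / 2 : ℝ) := Real.rpow_pos_of_pos hμ _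
  rw [abs_mul, abs_of_pos (inv_pos.2 hμ), Real.rpow_neg hμ.le]
  calc V⁻¹ * |∫ x, K x * (h x + 1) ∂μ|
      ≤ V⁻¹ * (β * ((eLpNorm h 2 μ).toReal * V ^ (1 / 2 : ℝ) + V)) := by
        gcongr
        exact abs_integral_mul_add_one_le hKβ hh
    _ = β * (1 + (V ^ (1 / 2 : ℝ))⁻¹ * (eLpNorm h 2 μ).toReal) := by
        field_simp
        linear_combination (β * (eLpNorm h 2 μ).toReal) * hsqrt

end WeightedIntegrals

theorem upscaled_coefficient_uniform_bounds_general
    (Ω : Set (EuclideanSpace ℝ (Fin 2))) (hΩmeas : MeasurableSet Ω)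
    (h0 : 0 < volume Ω) (hfin : volume Ω < ⊤)
    (K : EuclideanSpace ℝ (Fin 2) → ℝ) (hKmeas : Measurable K)
    (α β : ℝ) (hα : 0 < α) (hKbound : ∀ x ∈ Ω, α ≤ K x ∧ K x ≤ β)
    (q : EuclideanSpace ℝ (Fin 2) → ℝ) (hq : MemLp q 2 (volume.restrict Ω))
    (i : Fin 2)
    (u : EuclideanSpace ℝ (Fin 2) → ℝ)
    (huL2 : MemLp u 2 (volume.restrict Ω))
    (hgrad : MemLp (gradient u) 2 (volume.restrict Ω))
    (hzero : ∫ x in Ω, fderiv ℝ u x (EuclideanSpace.single i 1) = 0) :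
    (((volume Ω).toReal⁻¹ *
          (α * (eLpNorm (gradient u) 2 (volume.restrict Ω)).toReal ^ 2 -
            (eLpNorm q 2 (volume.restrict Ω)).toReal *
              (eLpNorm u 2 (volume.restrict Ω)).toReal) ≥ -(α / 2)) →
        (volume Ω).toReal⁻¹ *
            (∫ x in Ω, K x * ‖gradient u x + EuclideanSpace.single i 1‖ ^ 2) -
          (volume Ω).toReal⁻¹ * (∫ x in Ω, q x * u x) ≥ α / 2) ∧
    |(volume Ω).toReal⁻¹ *
        ∫ x in Ω, K x * (fderiv ℝ u x (EuclideanSpace.single i 1) + 1)|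
      ≤ β * (1 + (volume Ω).toReal ^ (-(1 / 2) : ℝ) *
          (eLpNorm (fun x => fderiv ℝ u x (EuclideanSpace.single i 1)) 2
            (volume.restrict Ω)).toReal) := by
  have : IsFiniteMeasure (volume.restrict Ω) := isFiniteMeasure_restrict.2 hfin.ne
  have hV : (volume.restrict Ω).real Set.univ = (volume Ω).toReal := by simp [measureReal_def]
  have hVpos : 0 < (volume Ω).toReal := ENNReal.toReal_pos h0.ne' hfin.ne
  have hKα : ∀ᵐ x ∂volume.restrict Ω, α ≤ K x :=
    (ae_restrict_mem hΩmeas).mono fun x hx => (hKbound x hx).1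
  have hKβ : ∀ᵐ x ∂volume.restrict Ω, ‖K x‖ ≤ β := (ae_restrict_mem hΩmeas).mono fun x hx => by
    rw [Real.norm_of_nonneg (hα.le.trans (hKbound x hx).1)]
    exact (hKbound x hx).2
  simp_rw [← inner_gradient_left (𝕜 := ℝ)] at hzero ⊢
  refine ⟨fun hmass => ?_, ?_⟩
  · have hcoer := mul_add_le_integral_mul_norm_add_sq hKmeas.aestronglyMeasurable hKα hKβ hgrad hzero
    have hcs : ∫ x in Ω, q x * u x ≤
        (eLpNorm q 2 (volume.restrict Ω)).toReal * (eLpNorm u 2 (volume.restrict Ω)).toReal := by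
      simpa [mul_comm] using integral_inner_le_toReal_eLpNorm_mul hq huL2
    have he : ‖EuclideanSpace.single i (1 : ℝ)‖ = 1 := by simp
    rw [hV, he, one_pow, mul_one] at hcoer
    have hA := mul_le_mul_of_nonneg_left hcoer (inv_nonneg.2 hVpos.le)
    have hB := mul_le_mul_of_nonneg_left hcs (inv_nonneg.2 hVpos.le)
    linear_combination hmass + hA + hB - α * inv_mul_cancel₀ hVpos.ne'
  · rw [← hV] at hVpos ⊢
    exact abs_inv_mul_integral_mul_add_one_le hVpos hKβ (hgrad.inner_const _)

/-- uniform lower ellipticity bound for the diagonal entry of the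
perturbed upscaled coefficient, and a bound on the averaged flux. -/
theorem upscaled_coefficient_uniform_bounds
    (Ω : Set (EuclideanSpace ℝ (Fin 2))) (hΩmeas : MeasurableSet Ω)
    (h0 : 0 < volume Ω) (hfin : volume Ω < ⊤)
    (K : EuclideanSpace ℝ (Fin 2) → ℝ) (hKmeas : Measurable K)
    (α β : ℝ) (hα : 0 < α) (hKbound : ∀ x ∈ Ω, α ≤ K x ∧ K x ≤ β)
    (q : EuclideanSpace ℝ (Fin 2) → ℝ) (hq : MemLp q 2 (volume.restrict Ω))
    (i : Fin 2)
    (u : EuclideanSpace ℝ (Fin 2) → ℝ) (hu : Differentiable ℝ u)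
    (huL2 : MemLp u 2 (volume.restrict Ω))
    (hgrad : MemLp (gradient u) 2 (volume.restrict Ω))
    (hzero : ∫ x in Ω, fderiv ℝ u x (EuclideanSpace.single i 1) = 0) :
    (((volume Ω).toReal⁻¹ *
          (α * (eLpNorm (gradient u) 2 (volume.restrict Ω)).toReal ^ 2 -
            (eLpNorm q 2 (volume.restrict Ω)).toReal *
              (eLpNorm u 2 (volume.restrict Ω)).toReal) ≥ -(α / 2)) →
        (volume Ω).toReal⁻¹ *
            (∫ x in Ω, K x * ‖gradient u x + EuclideanSpace.single i 1‖ ^ 2) -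
          (volume Ω).toReal⁻¹ * (∫ x in Ω, q x * u x) ≥ α / 2) ∧
    |(volume Ω).toReal⁻¹ *
        ∫ x in Ω, K x * (fderiv ℝ u x (EuclideanSpace.single i 1) + 1)|
      ≤ β * (1 + (volume Ω).toReal ^ (-(1 / 2) : ℝ) *
          (eLpNorm (fun x => fderiv ℝ u x (EuclideanSpace.single i 1)) 2
            (volume.restrict Ω)).toReal) :=
  upscaled_coefficient_uniform_bounds_general Ω hΩmeas h0 hfin K hKmeas α β hα hKbound q hq i u huL2
    hgrad hzero
end

section
/- Let Ω ⊆ ℝ² be a measurable set with 0 < |Ω| < ∞, let K : Ω → ℝ be measurable with 0 < α ≤ K(x) ≤ β, let q ∈ L²(Ω), let c_p > 0, and fix i ∈ {1,2}. Let û, ũ : Ω → ℝ be differentiable functions with û, ũ ∈ L²(Ω) and ∇û, ∇ũ ∈ L²(Ω; ℝ²), satisfying the Poincaré inequalities ‖û‖_{L²(Ω)} ≤ c_p·‖∇û‖_{L²(Ω)} and ‖ũ‖_{L²(Ω)} ≤ c_p·‖∇ũ‖_{L²(Ω)}, and the energy identities ∫_Ω K·|∇û|² dx = ∫_Ω q·û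 dx and ∫_Ω K·|∇ũ|² dx = −∫_Ω K·(e_i·∇ũ) dx. Then ‖∇û‖_{L²(Ω)} ≤ (c_p/α)·‖q‖_{L²(Ω)} and ‖∇ũ‖_{L²(Ω)} ≤ |Ω|^{1/2}·β/α; consequently, for u := û + ũ, ‖u‖_{L²(Ω)} ≤ (c_p²/α)·‖q‖_{L²(Ω)} + c_p·|Ω|^{1/2}·β/α and ‖∇u‖_{L²(Ω)} ≤ (c_p/α)·‖q‖_{L²(Ω)} + |Ω|^{1/2}·β/α. -/
open MeasureTheory

open scoped RealInnerProductSpace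

/-!
Each energy identity, combined with the coercivity `α ‖∇w‖² ≤ ∫ K |∇w|²`, gives
`α ‖∇w‖² ≤ C ‖∇w‖` once its right-hand side is bounded by Cauchy–Schwarz in `L²`: by
`‖q‖ ‖û‖ ≤ c_p ‖q‖ ‖∇û‖` (Poincaré) for the source term, and by `‖K e_i‖ ‖∇ũ‖ ≤ β |Ω|^{1/2} ‖∇ũ‖`
for the flux term. Dividing by `‖∇w‖` gives the gradient bounds; the bounds for `u = û + ũ`
follow from the triangle inequality and, for `u` itself, Poincaré.
-/

theorem gradient_fun_add {F : Type*} [NormedAddCommGroup F] [InnerProductSpace ℝ F]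
    [CompleteSpace F] {f g : F → ℝ} {x : F}
    (hf : DifferentiableAt ℝ f x) (hg : DifferentiableAt ℝ g x) :
    gradient (fun y => f y + g y) x = gradient f x + gradient g x := by
  simp only [gradient, fderiv_fun_add hf hg, map_add]

theorem le_div_of_mul_sq_le_mul {a b c : ℝ} (ha : 0 < a) (hb : 0 ≤ b) (hc : 0 ≤ c)
    (h : a * b ^ 2 ≤ c * b) : b ≤ c / a := by
  rw [le_div_iff₀ ha]
  rcases hb.eq_or_lt with rfl | hb
  · simpa using hc
  · nlinarith

namespace MeasureTheory

variable {X : Type*} [MeasurableSpace X] {μ : Measure X}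
  {E : Type*} [NormedAddCommGroup E]

theorem MemLp.integrable_norm_sq {f : X → E} (hf : MemLp f 2 μ) :
    Integrable (fun x => ‖f x‖ ^ 2) μ := by
  simpa using hf.integrable_norm_rpow two_ne_zero ENNReal.ofNat_ne_top

theorem toReal_eLpNorm_add_le {p : ENNReal} (hp : 1 ≤ p) {f g : X → E}
    (hf : MemLp f p μ) (hg : MemLp g p μ) :
    (eLpNorm (fun x => f x + g x) p μ).toReal
      ≤ (eLpNorm f p μ).toReal + (eLpNorm g p μ).toReal :=
  ENNReal.toReal_le_add (eLpNorm_add_le hf.1 hg.1 hp) hf.2.ne hg.2.ne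

theorem toReal_eLpNorm_le_of_ae_bound [IsFiniteMeasure μ] {p : ENNReal} {f : X → E} {C : ℝ}
    (hC : 0 ≤ C) (hfC : ∀ᵐ x ∂μ, ‖f x‖ ≤ C) :
    (eLpNorm f p μ).toReal ≤ (μ Set.univ).toReal ^ p.toReal⁻¹ * C := by
  refine (ENNReal.toReal_mono (by finiteness) (eLpNorm_le_of_ae_bound hfC)).trans_eq ?_
  rw [ENNReal.toReal_mul, ← ENNReal.toReal_rpow, ENNReal.toReal_ofReal hC]

variable [InnerProductSpace ℝ E]

theorem MemLp.integral_inner_le {f g : X → E} (hf : MemLp f 2 μ) (hg : MemLp g 2 μ) :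
    ∫ x, ⟪f x, g x⟫ ∂μ ≤ (eLpNorm f 2 μ).toReal * (eLpNorm g 2 μ).toReal := by
  have h_inner : ∫ x, ⟪f x, g x⟫ ∂μ = ⟪hf.toLp f, hg.toLp g⟫ := by
    rw [L2.inner_def]
    refine integral_congr_ae ?_
    filter_upwards [hf.coeFn_toLp, hg.coeFn_toLp] with x hfx hgx
    rw [hfx, hgx]
  rw [h_inner, ← Lp.norm_toLp f hf, ← Lp.norm_toLp g hg]
  exact real_inner_le_norm _ _

theorem MemLp.integral_norm_sq_eq {f : X → E} (hf : MemLp f 2 μ) :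
    ∫ x, ‖f x‖ ^ 2 ∂μ = (eLpNorm f 2 μ).toReal ^ 2 := by
  have h_inner : ∫ x, ⟪f x, f x⟫ ∂μ = ⟪hf.toLp f, hf.toLp f⟫ := by
    rw [L2.inner_def]
    refine integral_congr_ae ?_
    filter_upwards [hf.coeFn_toLp] with x hfx
    rw [hfx]
  simp_rw [real_inner_self_eq_norm_sq] at h_inner
  rwa [← Lp.norm_toLp f hf]

variable {K : X → ℝ} {α β : ℝ} {g : X → E}

theorem mul_eLpNorm_sq_le_integral_mul_norm_sq (hKm : AEStronglyMeasurable K μ)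
    (hK : ∀ᵐ x ∂μ, α ≤ K x ∧ K x ≤ β) (hg : MemLp g 2 μ) :
    α * (eLpNorm g 2 μ).toReal ^ 2 ≤ ∫ x, K x * ‖g x‖ ^ 2 ∂μ := by
  have hK_int : Integrable (fun x => K x * ‖g x‖ ^ 2) μ :=
    hg.integrable_norm_sq.bdd_mul hKm (c := max |α| |β|)
      (hK.mono fun x hx => abs_le_max_abs_abs hx.1 hx.2)
  rw [← hg.integral_norm_sq_eq, ← integral_const_mul]
  refine integral_mono_ae (hg.integrable_norm_sq.const_mul α) hK_int ?_
  filter_upwards [hK] with x hx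
  exact mul_le_mul_of_nonneg_right hx.1 (by positivity)

theorem toReal_eLpNorm_le_of_energy_eq_integral_mul {u q : X → ℝ} {cp : ℝ}
    (hKm : AEStronglyMeasurable K μ) (hK : ∀ᵐ x ∂μ, α ≤ K x ∧ K x ≤ β) (hα : 0 < α)
    (hcp : 0 ≤ cp) (hg : MemLp g 2 μ) (hu : MemLp u 2 μ) (hq : MemLp q 2 μ)
    (hpoincare : (eLpNorm u 2 μ).toReal ≤ cp * (eLpNorm g 2 μ).toReal)
    (henergy : ∫ x, K x * ‖g x‖ ^ 2 ∂μ = ∫ x, q x * u x ∂μ) :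
    (eLpNorm g 2 μ).toReal ≤ cp / α * (eLpNorm q 2 μ).toReal := by
  set G := (eLpNorm g 2 μ).toReal
  set Q := (eLpNorm q 2 μ).toReal
  have hCS : ∫ x, q x * u x ∂μ ≤ Q * (eLpNorm u 2 μ).toReal := by
    simpa only [real_inner_eq_re_inner, RCLike.inner_apply, conj_trivial, mul_comm]
      using hq.integral_inner_le hu
  have hquad : α * G ^ 2 ≤ cp * Q * G :=
    calc α * G ^ 2 ≤ ∫ x, K x * ‖g x‖ ^ 2 ∂μ := mul_eLpNorm_sq_le_integral_mul_norm_sq hKm hK hg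
      _ = ∫ x, q x * u x ∂μ := henergy
      _ ≤ Q * (eLpNorm u 2 μ).toReal := hCS
      _ ≤ Q * (cp * G) := mul_le_mul_of_nonneg_left hpoincare ENNReal.toReal_nonneg
      _ = cp * Q * G := by ring
  calc G ≤ cp * Q / α :=
        le_div_of_mul_sq_le_mul hα ENNReal.toReal_nonneg (by positivity) hquad
    _ = cp / α * Q := by ring

theorem toReal_eLpNorm_le_of_energy_eq_neg_integral_inner [IsFiniteMeasure μ] {e : E}
    (hKm : AEStronglyMeasurable K μ) (hK : ∀ᵐ x ∂μ, α ≤ K x ∧ K x ≤ β) (hα : 0 < α)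
    (hβ : 0 ≤ β) (hg : MemLp g 2 μ)
    (henergy : ∫ x, K x * ‖g x‖ ^ 2 ∂μ = -∫ x, K x * ⟪e, g x⟫ ∂μ) :
    (eLpNorm g 2 μ).toReal ≤ (μ Set.univ).toReal ^ ((1 : ℝ) / 2) * β * ‖e‖ / α := by
  set G := (eLpNorm g 2 μ).toReal
  have hflux_bound : ∀ᵐ x ∂μ, ‖-K x • e‖ ≤ β * ‖e‖ := by
    filter_upwards [hK] with x hx
    rw [norm_smul, norm_neg, Real.norm_of_nonneg (hα.le.trans hx.1)]
    exact mul_le_mul_of_nonneg_right hx.2 (norm_nonneg e)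
  have hflux : MemLp (fun x => -K x • e) 2 μ :=
    .of_bound (hKm.neg.smul aestronglyMeasurable_const) _ hflux_bound
  have hflux_norm : (eLpNorm (fun x => -K x • e) 2 μ).toReal
      ≤ (μ Set.univ).toReal ^ ((1 : ℝ) / 2) * (β * ‖e‖) := by
    simpa using toReal_eLpNorm_le_of_ae_bound (p := 2) (by positivity) hflux_bound
  have hquad : α * G ^ 2 ≤ (μ Set.univ).toReal ^ ((1 : ℝ) / 2) * β * ‖e‖ * G :=
    calc α * G ^ 2 ≤ ∫ x, K x * ‖g x‖ ^ 2 ∂μ := mul_eLpNorm_sq_le_integral_mul_norm_sq hKm hK hg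
      _ = ∫ x, ⟪-K x • e, g x⟫ ∂μ := by
        rw [henergy, ← integral_neg]
        simp only [inner_smul_left, neg_mul, conj_trivial]
      _ ≤ (eLpNorm (fun x => -K x • e) 2 μ).toReal * G := hflux.integral_inner_le hg
      _ ≤ _ := by
        rw [mul_assoc _ β]
        exact mul_le_mul_of_nonneg_right hflux_norm ENNReal.toReal_nonneg
  exact le_div_of_mul_sq_le_mul hα ENNReal.toReal_nonneg (by positivity) hquad

end MeasureTheory

/-- ε-independent H¹-type bounds for the fine-scale solution
`u = û + ũ` obtained from the energy identities and the Poincaré inequality. -/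
theorem eps_independent_H1_bound
    (Ω : Set (EuclideanSpace ℝ (Fin 2))) (hΩmeas : MeasurableSet Ω)
    (h0 : 0 < volume Ω) (hfin : volume Ω < ⊤)
    (K : EuclideanSpace ℝ (Fin 2) → ℝ) (hKmeas : Measurable K)
    (α β : ℝ) (hα : 0 < α) (hKbound : ∀ x ∈ Ω, α ≤ K x ∧ K x ≤ β)
    (q : EuclideanSpace ℝ (Fin 2) → ℝ) (hq : MemLp q 2 (volume.restrict Ω))
    (cp : ℝ) (hcp : 0 < cp) (i : Fin 2)
    (uhat utilde : EuclideanSpace ℝ (Fin 2) → ℝ)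
    (huhat : Differentiable ℝ uhat) (hutilde : Differentiable ℝ utilde)
    (huhatL2 : MemLp uhat 2 (volume.restrict Ω))
    (hutildeL2 : MemLp utilde 2 (volume.restrict Ω))
    (hghat : MemLp (gradient uhat) 2 (volume.restrict Ω))
    (hgtilde : MemLp (gradient utilde) 2 (volume.restrict Ω))
    (hpoincare1 : (eLpNorm uhat 2 (volume.restrict Ω)).toReal
      ≤ cp * (eLpNorm (gradient uhat) 2 (volume.restrict Ω)).toReal)
    (hpoincare2 : (eLpNorm utilde 2 (volume.restrict Ω)).toReal
      ≤ cp * (eLpNorm (gradient utilde) 2 (volume.restrict Ω)).toReal)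
    (henergy1 : ∫ x in Ω, K x * ‖gradient uhat x‖ ^ 2 = ∫ x in Ω, q x * uhat x)
    (henergy2 : ∫ x in Ω, K x * ‖gradient utilde x‖ ^ 2
      = -∫ x in Ω, K x * ⟪(EuclideanSpace.single i 1 : EuclideanSpace ℝ (Fin 2)),
          gradient utilde x⟫) :
    (eLpNorm (gradient uhat) 2 (volume.restrict Ω)).toReal
        ≤ cp / α * (eLpNorm q 2 (volume.restrict Ω)).toReal ∧
    (eLpNorm (gradient utilde) 2 (volume.restrict Ω)).toReal
        ≤ (volume Ω).toReal ^ ((1 : ℝ) / 2) * β / α ∧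
    (eLpNorm (fun x => uhat x + utilde x) 2 (volume.restrict Ω)).toReal
        ≤ cp ^ 2 / α * (eLpNorm q 2 (volume.restrict Ω)).toReal +
            cp * (volume Ω).toReal ^ ((1 : ℝ) / 2) * β / α ∧
    (eLpNorm (gradient (fun x => uhat x + utilde x)) 2 (volume.restrict Ω)).toReal
        ≤ cp / α * (eLpNorm q 2 (volume.restrict Ω)).toReal +
            (volume Ω).toReal ^ ((1 : ℝ) / 2) * β / α := by
  set μ := volume.restrict Ω
  have : IsFiniteMeasure μ := isFiniteMeasure_restrict.mpr hfin.ne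
  have hK : ∀ᵐ x ∂μ, α ≤ K x ∧ K x ≤ β := ae_restrict_of_forall_mem hΩmeas hKbound
  obtain ⟨x₀, hx₀⟩ := nonempty_of_measure_ne_zero h0.ne'
  have hβ : 0 ≤ β := hα.le.trans ((hKbound x₀ hx₀).1.trans (hKbound x₀ hx₀).2)
  have hghat_le := toReal_eLpNorm_le_of_energy_eq_integral_mul hKmeas.aestronglyMeasurable hK
    hα hcp.le hghat huhatL2 hq hpoincare1 henergy1
  have hgtilde_le : (eLpNorm (gradient utilde) 2 μ).toReal
      ≤ (volume Ω).toReal ^ ((1 : ℝ) / 2) * β / α := by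
    simpa [μ] using
      toReal_eLpNorm_le_of_energy_eq_neg_integral_inner hKmeas.aestronglyMeasurable hK
        hα hβ hgtilde henergy2
  have hgrad_add : gradient (fun x => uhat x + utilde x)
      = fun x => gradient uhat x + gradient utilde x :=
    funext fun x => gradient_fun_add (huhat x) (hutilde x)
  refine ⟨hghat_le, hgtilde_le, ?_, ?_⟩
  · calc (eLpNorm (fun x => uhat x + utilde x) 2 μ).toReal
        ≤ (eLpNorm uhat 2 μ).toReal + (eLpNorm utilde 2 μ).toReal :=
          toReal_eLpNorm_add_le one_le_two huhatL2 hutildeL2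
      _ ≤ cp * (eLpNorm (gradient uhat) 2 μ).toReal
            + cp * (eLpNorm (gradient utilde) 2 μ).toReal := add_le_add hpoincare1 hpoincare2
      _ ≤ cp * (cp / α * (eLpNorm q 2 μ).toReal)
            + cp * ((volume Ω).toReal ^ ((1 : ℝ) / 2) * β / α) := by gcongr
      _ = _ := by ring
  · rw [hgrad_add]
    exact (toReal_eLpNorm_add_le one_le_two hghat hgtilde).trans (add_le_add hghat_le hgtilde_le)
end
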